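/- arXiv:2111.07175 — 7 statements merged into one kernel-verified Lean document; each statement's English description precedes it below -/
import Mathlib

section
/- Let r ≥ 1 be an integer. For 0 ≤ j ≤ r-1, suppose A_j : (-ε, ε) → ℝ are smooth functions for some ε > 0, c_j are nonzero real numbers, and B_j : (0, ε) → ℝ are functions with B_j(t) → 0 as t → 0⁺. If ∑_{j=0}^{r-1} A_j(t) · t^{j/r} · (c_j + B_j(t)) = 0 for all t ∈ (0, ε), then each A_j vanishes to infinite order at 0 (i.e., all derivatives of A_j at 0 are zero). -/
open Topology Set

open Filter


lemma iter_eq {f : ℝ → ℝ} {s t : Set ℝ} (hf : ContDiffOn ℝ (⊤ : ℕ∞) f s)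
    (hs : UniqueDiffOn ℝ s) (ht : UniqueDiffOn ℝ t) (hts : t ⊆ s) {x : ℝ}
    (hx : x ∈ t) (m : ℕ) :
    iteratedDerivWithin m f t x = iteratedDerivWithin m f s x := by
  have H := ((hf.of_le (mod_cast le_top) : ContDiffOn ℝ (m : ℕ∞) f s).ftaylorSeriesWithin hs).mono hts
  have H2 := H.eq_iteratedFDerivWithin_of_uniqueDiffOn le_rfl ht hx
  simp only [iteratedDerivWithin_eq_iteratedFDerivWithin, ← H2, ftaylorSeriesWithin]

lemma taylor_lim {f : ℝ → ℝ} {ε : ℝ} (hε : 0 < ε)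
    (hf : ContDiffOn ℝ (⊤ : ℕ∞) f (Ioo (-ε) ε)) (m : ℕ)
    (hzero : ∀ k < m, iteratedDerivWithin k f (Ioo (-ε) ε) 0 = 0) :
    Tendsto (fun t => f t / t ^ m) (𝓝[>] (0:ℝ))
      (𝓝 (iteratedDerivWithin m f (Ioo (-ε) ε) 0 / (Nat.factorial m))) := by
  set s := Ioo (-ε) ε with hsdef
  have hsopen : IsOpen s := isOpen_Ioo
  have hsu : UniqueDiffOn ℝ s := hsopen.uniqueDiffOn
  have h0s : (0:ℝ) ∈ s := by constructor <;> simp [hε] <;> linarith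
  have hmem : s ∈ 𝓝 (0:ℝ) := hsopen.mem_nhds h0s
  set g := iteratedDerivWithin m f s with hgdef
  have hgc : ContinuousAt g 0 := by
    have := hf.continuousOn_iteratedDerivWithin (m := m) (by exact_mod_cast le_top) hsu
    exact (this 0 h0s).continuousAt hmem
  rcases Nat.eq_zero_or_pos m with hm | hm
  · subst hm
    simp only [pow_zero, div_one, Nat.factorial_zero, Nat.cast_one]
    exact hgc.tendsto.mono_left nhdsWithin_le_nhds
  obtain ⟨n, rfl⟩ : ∃ n, m = n + 1 := ⟨m - 1, by omega⟩
  rw [Metric.tendsto_nhdsWithin_nhds]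
  intro δ hδ
  have hfac : (0:ℝ) < (Nat.factorial (n+1)) := by positivity
  obtain ⟨η, hη, hball⟩ := Metric.continuousAt_iff.1 hgc (δ * (Nat.factorial (n+1))) (by positivity)
  refine ⟨min η ε, lt_min hη hε, ?_⟩
  intro t ht hdist
  have ht0 : 0 < t := ht
  have htε : t < ε := by
    have := hdist; rw [Real.dist_eq] at this
    have : |t - 0| < ε := lt_of_lt_of_le this (min_le_right _ _)
    simpa [abs_of_pos ht0] using this
  have htη : t < η := by
    have := hdist; rw [Real.dist_eq] at this
    have : |t - 0| < η := lt_of_lt_of_le this (min_le_left _ _)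
    simpa [abs_of_pos ht0] using this
  have hsub : Icc (0:ℝ) t ⊆ s := fun x hx => ⟨by linarith [hx.1], by linarith [hx.2]⟩
  have hIu : UniqueDiffOn ℝ (Icc (0:ℝ) t) := uniqueDiffOn_Icc ht0
  have hfI : ContDiffOn ℝ (⊤ : ℕ∞) f (Icc 0 t) := hf.mono hsub
  obtain ⟨x', hx', hrem⟩ := taylor_mean_remainder_lagrange (n := n) ht0.ne
    (by rw [uIcc_of_le ht0.le]; exact hfI.of_le (mod_cast le_top))
    (by rw [uIcc_of_le ht0.le, uIoo_of_le ht0.le]; exact ((hfI.differentiableOn_iteratedDerivWithin (n := ((⊤:ℕ∞) : WithTop ℕ∞))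
      (by exact_mod_cast WithTop.coe_lt_top _) hIu).mono Ioo_subset_Icc_self))
  rw [uIoo_of_le ht0.le] at hx'
  rw [uIcc_of_le ht0.le] at hrem
  have htay : taylorWithinEval f n (Icc 0 t) 0 t = 0 := by
    rw [taylor_within_apply]
    apply Finset.sum_eq_zero
    intro k hk
    rw [iter_eq hf hsu hIu hsub (left_mem_Icc.2 ht0.le) k,
      hzero k (by simpa using Finset.mem_range.1 hk), smul_zero]
  have hx's : x' ∈ Icc (0:ℝ) t := Ioo_subset_Icc_self hx'
  rw [iter_eq hf hsu hIu hsub hx's (n+1)] at hrem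
  rw [htay, sub_zero, sub_zero] at hrem
  have hft : f t / t ^ (n+1) = g x' / (Nat.factorial (n+1)) := by
    rw [hrem, hgdef]; field_simp
  rw [hft, Real.dist_eq, div_sub_div_same, abs_div, abs_of_pos hfac,
    div_lt_iff₀ hfac]
  have : dist x' 0 < η := by
    rw [Real.dist_eq, sub_zero, abs_of_pos hx'.1]; linarith [hx'.2]
  have := hball this
  rwa [Real.dist_eq] at this

lemma term_eq {t : ℝ} (ht : 0 < t) (a u : ℝ) {x y z : ℝ} {p : ℕ}
    (hexp : x - y = z - (p:ℝ)) :
    a * t ^ x * u / t ^ y = a / t ^ p * t ^ z * u := by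
  calc a * t ^ x * u / t ^ y = a * u * (t ^ x / t ^ y) := by ring
  _ = a * u * t ^ (x - y) := by rw [← Real.rpow_sub ht]
  _ = a * u * t ^ (z - (p:ℝ)) := by rw [hexp]
  _ = a * u * (t ^ z / t ^ (p:ℕ)) := by rw [Real.rpow_sub ht, Real.rpow_natCast]
  _ = a / t ^ p * t ^ z * u := by ring

/-- Lemma 2.1. If `∑ A_j(t) t^{j/r} (c_j + B_j(t)) = 0` on `(0,ε)` with `A_j`
smooth on `(-ε,ε)`, `c_j ≠ 0`, and `B_j → 0` as `t → 0⁺`, then each `A_j` vanishes to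
infinite order at `0`. -/
theorem stmt_0 (r : ℕ) (hr : 1 ≤ r) (ε : ℝ) (hε : 0 < ε)
    (A : Fin r → ℝ → ℝ)
    (hA : ∀ j, ContDiffOn ℝ (⊤ : ℕ∞) (A j) (Set.Ioo (-ε) ε))
    (c : Fin r → ℝ) (hc : ∀ j, c j ≠ 0)
    (B : Fin r → ℝ → ℝ)
    (hB : ∀ j, Filter.Tendsto (B j) (𝓝[>] (0:ℝ)) (𝓝 0))
    (heq : ∀ t ∈ Set.Ioo (0:ℝ) ε,
      ∑ j : Fin r, A j t * t ^ ((j : ℝ) / (r : ℝ)) * (c j + B j t) = 0) :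
    ∀ (j : Fin r) (m : ℕ), iteratedDerivWithin m (A j) (Set.Ioo (-ε) ε) 0 = 0 := by
  have hr0 : (0:ℝ) < r := by exact_mod_cast hr
  set s := Set.Ioo (-ε) ε with hsdef
  suffices H : ∀ n : ℕ, ∀ (j : Fin r) (m : ℕ), m * r + (j:ℕ) = n →
      iteratedDerivWithin m (A j) s 0 = 0 by
    intro j m; exact H _ j m rfl
  intro n
  induction n using Nat.strong_induction_on with
  | _ n IH =>
  intro j m hn
  have H1 : ∀ (i : Fin r) (k : ℕ), k < m → iteratedDerivWithin k (A i) s 0 = 0 := by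
    intro i k hk
    refine IH (k * r + (i:ℕ)) ?_ i k rfl
    have h1 : (i:ℕ) < r := i.isLt
    have h2 : (k+1) * r ≤ m * r := Nat.mul_le_mul_right r hk
    have h3 : (k+1) * r = k * r + r := by ring
    omega
  have H2 : ∀ i : Fin r, (i:ℕ) < (j:ℕ) → iteratedDerivWithin m (A i) s 0 = 0 := by
    intro i hi; exact IH (m * r + (i:ℕ)) (by omega) i m rfl
  have hlim : ∀ i : Fin r, Filter.Tendsto (fun t => A i t / t ^ m) (𝓝[>] (0:ℝ))
      (𝓝 (iteratedDerivWithin m (A i) s 0 / (Nat.factorial m))) :=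
    fun i => taylor_lim hε (hA i) m (H1 i)
  have hlim' : ∀ i : Fin r, (i:ℕ) < (j:ℕ) →
      Filter.Tendsto (fun t => A i t / t ^ (m+1)) (𝓝[>] (0:ℝ))
      (𝓝 (iteratedDerivWithin (m+1) (A i) s 0 / (Nat.factorial (m+1)))) := by
    intro i hi
    refine taylor_lim hε (hA i) (m+1) ?_
    intro k hk
    rcases Nat.lt_succ_iff_lt_or_eq.1 hk with h | h
    · exact H1 i k h
    · subst h; exact H2 i hi
  set e : ℝ := (m:ℝ) + (j:ℝ)/(r:ℝ) with hedef
  have hrpow0 : ∀ z : ℝ, 0 < z →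
      Filter.Tendsto (fun t:ℝ => t ^ z) (𝓝[>] (0:ℝ)) (𝓝 0) := by
    intro z hz
    have h := (Real.continuousAt_rpow_const 0 z (Or.inr hz.le)).tendsto.mono_left
      (nhdsWithin_le_nhds (s := Set.Ioi (0:ℝ)))
    simpa [Real.zero_rpow hz.ne'] using h
  have hterm : ∀ i : Fin r,
      Filter.Tendsto (fun t => A i t * t ^ ((i:ℝ)/(r:ℝ)) * (c i + B i t) / t ^ e)
      (𝓝[>] (0:ℝ))
      (𝓝 (if i = j then iteratedDerivWithin m (A j) s 0 / (Nat.factorial m) * c j else 0)) := by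
    intro i
    rcases lt_trichotomy (i:ℕ) (j:ℕ) with hij | hij | hij
    · have hne : i ≠ j := fun h => by subst h; exact lt_irrefl _ hij
      set z : ℝ := 1 + ((i:ℝ)-(j:ℝ))/(r:ℝ) with hzdef
      have hjr : ((j:ℕ):ℝ) - ((i:ℕ):ℝ) < r := by
        have : (j:ℕ) < r := j.isLt
        have h0 : (0:ℝ) ≤ ((i:ℕ):ℝ) := by positivity
        have : ((j:ℕ):ℝ) < r := by exact_mod_cast this
        linarith
      have hz : 0 < z := by
        rw [hzdef]
        have : ((i:ℝ)-(j:ℝ))/(r:ℝ) > -1 := by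
          rw [gt_iff_lt, lt_div_iff₀ hr0]
          push_cast
          linarith
        linarith
      have heqt : ∀ᶠ t in 𝓝[>] (0:ℝ),
          A i t * t ^ ((i:ℝ)/(r:ℝ)) * (c i + B i t) / t ^ e
            = A i t / t ^ (m+1) * t ^ z * (c i + B i t) := by
        filter_upwards [self_mem_nhdsWithin] with t ht
        exact term_eq ht _ _ (by rw [hedef, hzdef]; push_cast; ring)
      rw [tendsto_congr' heqt, if_neg hne]
      have h := ((hlim' i hij).mul (hrpow0 z hz)).mul
        ((tendsto_const_nhds (x := c i)).add (hB i))
      simpa using h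
    · have hij' : i = j := Fin.ext hij
      subst hij'
      have heqt : ∀ᶠ t in 𝓝[>] (0:ℝ),
          A i t * t ^ ((i:ℝ)/(r:ℝ)) * (c i + B i t) / t ^ e
            = A i t / t ^ m * t ^ (0:ℝ) * (c i + B i t) := by
        filter_upwards [self_mem_nhdsWithin] with t ht
        exact term_eq ht _ _ (by rw [hedef]; push_cast; ring)
      rw [tendsto_congr' heqt, if_pos rfl]
      have h := ((hlim i).mul
        (tendsto_const_nhds (x := (1:ℝ)))).mul ((tendsto_const_nhds (x := c i)).add (hB i))
      simp only [Real.rpow_zero] at h ⊢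
      simpa using h
    · have hne : i ≠ j := fun h => by subst h; exact lt_irrefl _ hij
      set z : ℝ := ((i:ℝ)-(j:ℝ))/(r:ℝ) with hzdef
      have hz : 0 < z := by
        rw [hzdef]
        apply div_pos _ hr0
        have : ((j:ℕ):ℝ) < ((i:ℕ):ℝ) := by exact_mod_cast hij
        push_cast
        linarith
      have heqt : ∀ᶠ t in 𝓝[>] (0:ℝ),
          A i t * t ^ ((i:ℝ)/(r:ℝ)) * (c i + B i t) / t ^ e
            = A i t / t ^ m * t ^ z * (c i + B i t) := by
        filter_upwards [self_mem_nhdsWithin] with t ht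
        exact term_eq ht _ _ (by rw [hedef, hzdef]; push_cast; ring)
      rw [tendsto_congr' heqt, if_neg hne]
      have h := ((hlim i).mul (hrpow0 z hz)).mul
        ((tendsto_const_nhds (x := c i)).add (hB i))
      simpa using h
  have hsum := tendsto_finset_sum (Finset.univ : Finset (Fin r))
    (fun i _ => hterm i)
  have hzero : Filter.Tendsto
      (fun t => ∑ i : Fin r, A i t * t ^ ((i:ℝ)/(r:ℝ)) * (c i + B i t) / t ^ e)
      (𝓝[>] (0:ℝ)) (𝓝 0) := by
    apply Filter.Tendsto.congr' _ tendsto_const_nhds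
    filter_upwards [Ioo_mem_nhdsGT_of_mem ⟨le_refl (0:ℝ), hε⟩] with t ht
    rw [← Finset.sum_div, heq t ht, zero_div]
  have huniq := tendsto_nhds_unique hsum hzero
  rw [Finset.sum_ite_eq' Finset.univ j
    (fun _ => iteratedDerivWithin m (A j) s 0 / (Nat.factorial m) * c j),
    if_pos (Finset.mem_univ j)] at huniq
  have hfac : ((Nat.factorial m : ℝ)) ≠ 0 := by positivity
  have := mul_eq_zero.1 huniq
  rcases this with h | h
  · exact (div_eq_zero_iff.1 h).resolve_right hfac
  · exact absurd h (hc j)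
end

section
/- Let f : (0, ε) → ℝ satisfy f(t) = t^{-α}(c₀ + O(t^{1/r})) as t → 0⁺, where α = 2 + 2/r, r ≥ 1 is an integer, and c₀ ≠ 0. Suppose β₀, …, β_d are real polynomials (restricted to (0,ε)) such that β_d(t)·f(t)^d + β_{d-1}(t)·f(t)^{d-1} + ⋯ + β₀(t) = 0 on (0, ε), with β_d not identically zero. Then 2d ≥ r. -/
open Topology Set Asymptotics

private lemma rpow_tendsto_zero {x : ℝ} (hx : 0 < x) :
    Filter.Tendsto (fun t : ℝ => t ^ x) (𝓝[>] (0:ℝ)) (𝓝 0) := by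
  have h := (Real.continuousAt_rpow_const 0 x (Or.inr hx.le)).tendsto
  rw [Real.zero_rpow hx.ne'] at h
  exact h.mono_left nhdsWithin_le_nhds

/-- if `f(t) = t^{-(2+2/r)}(c₀ + O(t^{1/r}))` as `t → 0⁺` with `c₀ ≠ 0`, and `f`
satisfies a polynomial relation `∑_{j=0}^d β_j(t) f(t)^j = 0` on `(0,ε)` with `β_d ≢ 0`,
then `2d ≥ r`. -/
theorem stmt_2 (r : ℕ) (hr : 1 ≤ r) (ε c₀ : ℝ) (hε : 0 < ε) (hc₀ : c₀ ≠ 0)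
    (f E : ℝ → ℝ)
    (hf : ∀ t ∈ Set.Ioo (0:ℝ) ε, f t = t ^ (-(2 + 2 / (r : ℝ))) * (c₀ + E t))
    (hE : E =O[𝓝[>] (0:ℝ)] (fun t : ℝ => t ^ ((1 : ℝ) / (r : ℝ))))
    (d : ℕ) (β : Fin (d + 1) → Polynomial ℝ)
    (hβd : β (Fin.last d) ≠ 0)
    (heq : ∀ t ∈ Set.Ioo (0:ℝ) ε,
      ∑ j : Fin (d + 1), (β j).eval t * f t ^ (j : ℕ) = 0) :
    r ≤ 2 * d := by
  by_contra hlt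
  push_neg at hlt
  have hrR : (0:ℝ) < (r:ℝ) := by exact_mod_cast hr
  have hr0 : (r:ℝ) ≠ 0 := hrR.ne'
  set α : ℝ := 2 + 2 / (r : ℝ) with hα
  set m : Fin (d+1) → ℕ := fun j => (β j).rootMultiplicity 0 with hm
  -- factorization β j = X ^ m j * q j
  have hfac : ∀ j : Fin (d+1), ∃ qq : Polynomial ℝ,
      β j = Polynomial.X ^ (m j) * qq ∧ (β j ≠ 0 → qq.eval 0 ≠ 0) := by
    intro j
    by_cases h : β j = 0
    · exact ⟨0, by simp [h], fun h' => absurd h h'⟩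
    · obtain ⟨qq, hqq, hnd⟩ := (β j).exists_eq_pow_rootMultiplicity_mul_and_not_dvd h 0
      refine ⟨qq, by simpa [hm] using hqq, fun _ h0 => hnd ?_⟩
      rw [map_zero, sub_zero, Polynomial.X_dvd_iff, Polynomial.coeff_zero_eq_eval_zero]
      exact h0
  choose q hq hq0 using hfac
  set μ : Fin (d+1) → ℝ := fun j => (m j : ℝ) - α * (j : ℕ) with hμ
  -- μ is injective
  have hinj : ∀ j k : Fin (d+1), μ j = μ k → j = k := by
    intro j k h
    by_contra hne
    have hℝ : (r:ℝ) * (m j) - (2*r+2) * (j:ℕ) = (r:ℝ) * (m k) - (2*r+2) * (k:ℕ) := by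
      have h2 : (m j : ℝ) - α * (j:ℕ) = (m k : ℝ) - α * (k:ℕ) := h
      rw [hα] at h2
      field_simp at h2
      nlinarith [h2]
    have hℤ : (r:ℤ) * (m j) - (2*r+2) * ((j:ℕ):ℤ) = (r:ℤ) * (m k) - (2*r+2) * ((k:ℕ):ℤ) := by
      exact_mod_cast hℝ
    have hdvd : (r:ℤ) ∣ 2 * (((j:ℕ):ℤ) - ((k:ℕ):ℤ)) :=
      ⟨(m j : ℤ) - (m k : ℤ) - 2 * ((j:ℕ):ℤ) + 2 * ((k:ℕ):ℤ), by linarith⟩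
    have hdvd' : (r:ℤ) ∣ |2 * (((j:ℕ):ℤ) - ((k:ℕ):ℤ))| := (dvd_abs _ _).mpr hdvd
    have hjk : ((j:ℕ):ℤ) ≠ ((k:ℕ):ℤ) := by
      simpa [Fin.val_eq_val] using hne
    have hpos : 0 < |2 * (((j:ℕ):ℤ) - ((k:ℕ):ℤ))| := by
      rw [abs_pos]; omega
    have hle := Int.le_of_dvd hpos hdvd'
    have hjd : ((j:ℕ):ℤ) ≤ d := by exact_mod_cast Fin.is_le j
    have hkd : ((k:ℕ):ℤ) ≤ d := by exact_mod_cast Fin.is_le k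
    have hj0 : 0 ≤ ((j:ℕ):ℤ) := Int.natCast_nonneg _
    have hk0 : 0 ≤ ((k:ℕ):ℤ) := Int.natCast_nonneg _
    have habs : |2 * (((j:ℕ):ℤ) - ((k:ℕ):ℤ))| ≤ 2 * d := by
      rw [abs_le]; omega
    have : (r:ℤ) ≤ 2 * d := le_trans hle habs
    have : r ≤ 2 * d := by exact_mod_cast this
    omega
  -- pick the minimizing index among nonzero β's
  obtain ⟨j₀, hj₀S, hmin⟩ := Finset.exists_min_image
    (Finset.univ.filter fun j => β j ≠ 0) μ
    ⟨Fin.last d, by simp [hβd]⟩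
  have hβj₀ : β j₀ ≠ 0 := by simpa using hj₀S
  set G : Fin (d+1) → ℝ → ℝ :=
    fun j t => t ^ (μ j - μ j₀) * (q j).eval t * (c₀ + E t) ^ (j:ℕ) with hG
  set L : ℝ := (q j₀).eval 0 * c₀ ^ (j₀:ℕ) with hL
  -- E tends to 0
  have hE0 : Filter.Tendsto E (𝓝[>] (0:ℝ)) (𝓝 0) :=
    hE.trans_tendsto (rpow_tendsto_zero (by positivity))
  have hEc : Filter.Tendsto (fun t => c₀ + E t) (𝓝[>] (0:ℝ)) (𝓝 c₀) := by
    have := Filter.Tendsto.add (tendsto_const_nhds (x := c₀)) hE0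
    simpa using this
  -- the sum of G j tends to L
  have htend : Filter.Tendsto (fun t => ∑ j : Fin (d+1), G j t) (𝓝[>] (0:ℝ)) (𝓝 L) := by
    have hLsum : L = ∑ j : Fin (d+1), (if j = j₀ then L else 0) := by
      rw [Finset.sum_ite_eq' Finset.univ j₀ (fun _ => L)]
      simp
    rw [hLsum]
    apply tendsto_finset_sum
    intro j _
    have hqev : Filter.Tendsto (fun t => (q j).eval t) (𝓝[>] (0:ℝ)) (𝓝 ((q j).eval 0)) :=
      ((q j).continuous_aeval.tendsto 0).mono_left nhdsWithin_le_nhds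
    have hcp : Filter.Tendsto (fun t => (c₀ + E t) ^ (j:ℕ)) (𝓝[>] (0:ℝ)) (𝓝 (c₀ ^ (j:ℕ))) :=
      hEc.pow _
    by_cases hj : j = j₀
    · subst hj
      simp only [sub_self, if_pos rfl]
      have h1 : Filter.Tendsto (fun t : ℝ => t ^ (0:ℝ)) (𝓝[>] (0:ℝ)) (𝓝 1) := by
        simp only [Real.rpow_zero]; exact tendsto_const_nhds
      have := (h1.mul hqev).mul hcp
      simpa [hG, hL] using this
    · simp only [if_neg hj]
      by_cases hbj : β j = 0
      · have hqz : q j = 0 := by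
          have := hq j
          rw [hbj] at this
          rcases mul_eq_zero.mp this.symm with h | h
          · exact absurd h (pow_ne_zero _ Polynomial.X_ne_zero)
          · exact h
        have hz : ∀ t : ℝ, (0:ℝ) = G j t := fun t => by simp [hG, hqz]
        exact Filter.Tendsto.congr hz tendsto_const_nhds
      · have hjS : j ∈ Finset.univ.filter fun j => β j ≠ 0 := by simpa using hbj
        have hle : μ j₀ ≤ μ j := hmin j hjS
        have hne : μ j ≠ μ j₀ := fun h => hj (hinj j j₀ h)
        have hpos : 0 < μ j - μ j₀ := sub_pos.mpr (lt_of_le_of_ne hle (Ne.symm hne))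
        have h1 := rpow_tendsto_zero hpos
        have := (h1.mul hqev).mul hcp
        simpa [hG] using this
  -- the sum of G j is eventually 0
  have hev : ∀ᶠ t in 𝓝[>] (0:ℝ), (∑ j : Fin (d+1), G j t) = 0 := by
    filter_upwards [Ioo_mem_nhdsGT_of_mem (Set.left_mem_Ico.mpr hε)] with t ht
    have ht0 : 0 < t := ht.1
    have hterm : ∀ j : Fin (d+1),
        G j t = t ^ (-μ j₀) * ((β j).eval t * f t ^ (j:ℕ)) := by
      intro j
      rw [hf t ht, hq j]
      simp only [Polynomial.eval_mul, Polynomial.eval_pow, Polynomial.eval_X]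
      rw [mul_pow]
      have h1 : (t:ℝ) ^ (m j) = t ^ ((m j : ℝ)) := (Real.rpow_natCast t (m j)).symm
      have h2 : (t ^ (-α)) ^ ((j:ℕ)) = t ^ (-α * ((j:ℕ):ℝ)) := by
        rw [← Real.rpow_natCast (t ^ (-α)) (j:ℕ), ← Real.rpow_mul ht0.le]
      rw [h1, h2]
      have key : t ^ (-μ j₀) * t ^ ((m j : ℝ)) * t ^ (-α * ((j:ℕ):ℝ)) = t ^ (μ j - μ j₀) := by
        rw [← Real.rpow_add ht0, ← Real.rpow_add ht0]
        congr 1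
        simp only [hμ]
        ring
      calc t ^ (μ j - μ j₀) * (q j).eval t * (c₀ + E t) ^ (j:ℕ)
          = (t ^ (-μ j₀) * t ^ ((m j : ℝ)) * t ^ (-α * ((j:ℕ):ℝ)))
              * (q j).eval t * (c₀ + E t) ^ (j:ℕ) := by rw [key]
        _ = t ^ (-μ j₀) * (t ^ ((m j : ℝ)) * (q j).eval t
              * (t ^ (-α * ((j:ℕ):ℝ)) * (c₀ + E t) ^ (j:ℕ))) := by ring
    calc (∑ j : Fin (d+1), G j t)
        = ∑ j : Fin (d+1), t ^ (-μ j₀) * ((β j).eval t * f t ^ (j:ℕ)) := by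
          exact Finset.sum_congr rfl fun j _ => hterm j
      _ = t ^ (-μ j₀) * ∑ j : Fin (d+1), (β j).eval t * f t ^ (j:ℕ) := by
          rw [Finset.mul_sum]
      _ = 0 := by rw [heq t ht, mul_zero]
  -- conclude
  have htend0 : Filter.Tendsto (fun t => ∑ j : Fin (d+1), G j t) (𝓝[>] (0:ℝ)) (𝓝 0) :=
    Filter.Tendsto.congr' (Filter.EventuallyEq.symm hev) tendsto_const_nhds
  have hL0 : L = 0 := tendsto_nhds_unique htend htend0
  have hLne : L ≠ 0 := mul_ne_zero (hq0 j₀ hβj₀) (pow_ne_zero _ hc₀)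
  exact hLne hL0
end

section
/- Let f be a nontrivial real-analytic algebraic function on an open connected set U ⊆ ℝⁿ. Then the ideal I = {P(t, Y) ∈ ℝ[t₁,…,tₙ, Y] : P(t, f(t)) ≡ 0 on U} is a principal ideal in ℝ[t, Y], and its generator is unique up to multiplication by a nonzero real constant. -/
/-- `P(t, Y)` annihilates `f` on `U`: `P(t, f(t)) ≡ 0` on `U`. -/
def AnnihilatesOn (n : ℕ) (U : Set (Fin n → ℝ)) (f : (Fin n → ℝ) → ℝ)
    (P : Polynomial (MvPolynomial (Fin n) ℝ)) : Prop :=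
  ∀ x ∈ U, Polynomial.eval₂ (MvPolynomial.eval x) (f x) P = 0

namespace Stmt5Aux

/-- Evaluation of a multivariate polynomial is analytic on all of `ℝⁿ`. -/
lemma mv_analytic {n : ℕ} (q : MvPolynomial (Fin n) ℝ) :
    AnalyticOnNhd ℝ (fun x : Fin n → ℝ => MvPolynomial.eval x q) Set.univ := by
  induction q using MvPolynomial.induction_on with
  | C a =>
      simpa using (analyticOnNhd_const :
        AnalyticOnNhd ℝ (fun _ : Fin n → ℝ => a) Set.univ)
  | add p q hp hq => simpa [Pi.add_def] using hp.add hq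
  | mul_X p i hp =>
      have hproj : AnalyticOnNhd ℝ (fun x : Fin n → ℝ => x i) Set.univ :=
        fun x _ => (ContinuousLinearMap.proj (R := ℝ) (φ := fun _ : Fin n => ℝ) i).analyticAt x
      simpa using hp.mul hproj

/-- `x ↦ P(x, f(x))` is analytic on `U` when `f` is. -/
lemma eval_analytic {n : ℕ} {U : Set (Fin n → ℝ)} {f : (Fin n → ℝ) → ℝ}
    (hf : AnalyticOnNhd ℝ f U) (P : Polynomial (MvPolynomial (Fin n) ℝ)) :
    AnalyticOnNhd ℝ (fun x => Polynomial.eval₂ (MvPolynomial.eval x) (f x) P) U := by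
  induction P using Polynomial.induction_on' with
  | add p q hp hq => simpa [Polynomial.eval₂_add, Pi.add_def] using hp.add hq
  | monomial k a =>
      simpa [Polynomial.eval₂_monomial] using
        ((mv_analytic a).mono (Set.subset_univ U)).mul (hf.pow k)

/-- A multivariate polynomial vanishing on a nonempty open set is zero. -/
lemma mv_eq_zero {n : ℕ} {U : Set (Fin n → ℝ)} (hUo : IsOpen U) (hne : U.Nonempty)
    {q : MvPolynomial (Fin n) ℝ} (h : ∀ x ∈ U, MvPolynomial.eval x q = 0) : q = 0 := by
  obtain ⟨x₀, hx₀⟩ := hne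
  have hev : (fun x => MvPolynomial.eval x q) =ᶠ[nhds x₀] 0 := by
    filter_upwards [hUo.mem_nhds hx₀] with y hy using h y hy
  have hz := (mv_analytic q).eqOn_zero_of_preconnected_of_eventuallyEq_zero
      isPreconnected_univ (Set.mem_univ x₀) hev
  exact MvPolynomial.funext fun x => by simpa using hz (Set.mem_univ x)

/-- Product of analytic functions vanishing on connected open `U` forces one factor to vanish. -/
lemma mul_eq_zero_analytic {n : ℕ} {U : Set (Fin n → ℝ)} (hUo : IsOpen U)
    (hUconn : IsConnected U) {g h : (Fin n → ℝ) → ℝ}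
    (hg : AnalyticOnNhd ℝ g U) (hh : AnalyticOnNhd ℝ h U)
    (hgh : ∀ x ∈ U, g x * h x = 0) :
    (∀ x ∈ U, g x = 0) ∨ (∀ x ∈ U, h x = 0) := by
  by_cases hgz : ∀ x ∈ U, g x = 0
  · exact Or.inl hgz
  · push_neg at hgz
    obtain ⟨x₀, hx₀U, hx₀⟩ := hgz
    right
    have hgc : ContinuousAt g x₀ := (hg x₀ hx₀U).continuousAt
    have hevne : ∀ᶠ y in nhds x₀, g y ≠ 0 := hgc.eventually_ne hx₀
    have hev : h =ᶠ[nhds x₀] 0 := by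
      filter_upwards [hUo.mem_nhds hx₀U, hevne] with y hyU hyg
      have := hgh y hyU
      rcases mul_eq_zero.mp this with h1 | h2
      · exact absurd h1 hyg
      · exact h2
    have := hh.eqOn_zero_of_preconnected_of_eventuallyEq_zero
        hUconn.isPreconnected hx₀U hev
    exact fun x hx => this hx

/-- Units of `MvPolynomial (Fin n) ℝ` are nonzero constants. -/
lemma mv_isUnit {n : ℕ} {r : MvPolynomial (Fin n) ℝ} (h : IsUnit r) :
    ∃ c : ℝ, c ≠ 0 ∧ r = MvPolynomial.C c := by
  induction n with
  | zero =>
      have hr : r = MvPolynomial.C (r.coeff 0) := MvPolynomial.eq_C_of_isEmpty r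
      have hu : IsUnit (MvPolynomial.constantCoeff r) := h.map MvPolynomial.constantCoeff
      refine ⟨MvPolynomial.constantCoeff r, hu.ne_zero, ?_⟩
      rw [hr]
      simp [MvPolynomial.constantCoeff]
  | succ m ih =>
      set e := MvPolynomial.finSuccEquiv ℝ m with he
      have hu : IsUnit (e r) := h.map e
      obtain ⟨s, hs_unit, hs⟩ := Polynomial.isUnit_iff.mp hu
      obtain ⟨c, hc, rfl⟩ := ih hs_unit
      refine ⟨c, hc, ?_⟩
      apply e.injective
      have h1 : e (MvPolynomial.C c) = Polynomial.C (MvPolynomial.C c) := by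
        have := e.commutes c
        rwa [show (algebraMap ℝ (MvPolynomial (Fin (m + 1)) ℝ)) c = MvPolynomial.C c from rfl,
          Polynomial.algebraMap_apply,
          show (algebraMap ℝ (MvPolynomial (Fin m) ℝ)) c = MvPolynomial.C c from rfl] at this
      rw [h1, hs]

end Stmt5Aux

set_option maxHeartbeats 1000000 in
set_option synthInstance.maxHeartbeats 400000 in
/-- for a nontrivial real-analytic algebraic function `f` on an open connected
`U ⊆ ℝⁿ`, the ideal `I = {P ∈ ℝ[t,Y] : P(t,f(t)) ≡ 0 on U}` is principal, and its generator
is unique up to a nonzero real constant. -/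
theorem stmt_5 (n : ℕ) (U : Set (Fin n → ℝ)) (hU : IsOpen U) (hUconn : IsConnected U)
    (f : (Fin n → ℝ) → ℝ) (hf : AnalyticOnNhd ℝ f U)
    (halg : ∃ P : Polynomial (MvPolynomial (Fin n) ℝ), P ≠ 0 ∧ AnnihilatesOn n U f P) :
    ∃ P₀ : Polynomial (MvPolynomial (Fin n) ℝ), P₀ ≠ 0 ∧
      (∀ P, AnnihilatesOn n U f P ↔ P₀ ∣ P) ∧
      (∀ P₁ : Polynomial (MvPolynomial (Fin n) ℝ),
        (∀ P, AnnihilatesOn n U f P ↔ P₁ ∣ P) →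
        ∃ c : ℝ, c ≠ 0 ∧ P₁ = Polynomial.C (MvPolynomial.C c) * P₀) := by
  classical
  set R := MvPolynomial (Fin n) ℝ with hR
  letI : NormalizationMonoid R :=
    (UniqueFactorizationMonoid.strongNormalizationMonoid (α := R)).toNormalizationMonoid
  letI : NormalizedGCDMonoid R := UniqueFactorizationMonoid.toNormalizedGCDMonoid R
  -- the evaluation homomorphism and the annihilating ideal
  set ψ : Polynomial R →+* (U → ℝ) :=
    Pi.ringHom fun u : U => Polynomial.eval₂RingHom (MvPolynomial.eval (u : Fin n → ℝ)) (f u)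
      with hψ
  set I : Ideal (Polynomial R) := RingHom.ker ψ with hI
  have hmem : ∀ P : Polynomial R, P ∈ I ↔ AnnihilatesOn n U f P := by
    intro P
    constructor
    · intro hP x hx
      have h := congrFun (RingHom.mem_ker.mp hP) ⟨x, hx⟩
      exact h
    · intro hP
      refine RingHom.mem_ker.mpr (funext fun u => ?_)
      exact hP u u.2
  have hUne : U.Nonempty := hUconn.nonempty
  -- no nonzero polynomial in `t` alone lies in `I`
  have hcap : ∀ q : R, Polynomial.C q ∈ I → q = 0 := by
    intro q hq
    refine Stmt5Aux.mv_eq_zero hU hUne (fun x hx => ?_)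
    have := (hmem _).mp hq x hx
    simpa using this
  -- `I` is a prime ideal
  have hInetop : I ≠ ⊤ := by
    intro htop
    have h1 : (1 : Polynomial R) ∈ I := htop ▸ Submodule.mem_top
    obtain ⟨x₀, hx₀⟩ := hUne
    have h2 := (hmem 1).mp h1 x₀ hx₀
    simp at h2
  have hIprime : I.IsPrime := by
    refine ⟨hInetop, ?_⟩
    intro P Q hPQ
    have hP' := Stmt5Aux.eval_analytic hf P
    have hQ' := Stmt5Aux.eval_analytic hf Q
    have hprod : ∀ x ∈ U,
        (Polynomial.eval₂ (MvPolynomial.eval x) (f x) P) *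
        (Polynomial.eval₂ (MvPolynomial.eval x) (f x) Q) = 0 := by
      intro x hx
      have := (hmem _).mp hPQ x hx
      simpa [Polynomial.eval₂_mul] using this
    rcases Stmt5Aux.mul_eq_zero_analytic hU hUconn hP' hQ' hprod with h | h
    · exact Or.inl ((hmem P).mpr h)
    · exact Or.inr ((hmem Q).mpr h)
  -- pass to the fraction field
  set K := FractionRing R with hK
  set φ : Polynomial R →+* Polynomial K := Polynomial.mapRingHom (algebraMap R K) with hφ
  have hφinj : Function.Injective φ :=
    Polynomial.map_injective (algebraMap R K) (IsFractionRing.injective R K)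
  set J : Ideal (Polynomial K) := I.map φ with hJ
  -- clearing denominators: every element of `J` is, up to a nonzero constant of `R`,
  -- the image of an element of `I`
  have hclear : ∀ x ∈ J, ∃ d : R, d ≠ 0 ∧ ∃ s ∈ I,
      Polynomial.map (algebraMap R K) s = Polynomial.C (algebraMap R K d) * x := by
    intro x hx
    have hx' : x ∈ Submodule.span (Polynomial K) (φ '' (I : Set (Polynomial R))) := hx
    clear hx
    induction hx' using Submodule.span_induction with
    | mem y hy =>
        obtain ⟨s, hsI, rfl⟩ := hy
        exact ⟨1, one_ne_zero, s, hsI, by simp [hφ]⟩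
    | zero => exact ⟨1, one_ne_zero, 0, zero_mem I, by simp⟩
    | add y z _ _ hy hz =>
        obtain ⟨d1, hd1, s1, hs1, hm1⟩ := hy
        obtain ⟨d2, hd2, s2, hs2, hm2⟩ := hz
        refine ⟨d1 * d2, mul_ne_zero hd1 hd2,
          Polynomial.C d2 * s1 + Polynomial.C d1 * s2,
          I.add_mem (I.mul_mem_left _ hs1) (I.mul_mem_left _ hs2), ?_⟩
        rw [Polynomial.map_add, Polynomial.map_mul, Polynomial.map_mul, hm1, hm2]
        simp only [Polynomial.map_C, map_mul]
        ring
    | smul a y _ hy =>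
        obtain ⟨d, hd, s, hs, hm⟩ := hy
        obtain ⟨b, hb⟩ :=
          IsLocalization.integerNormalization_map_to_map (nonZeroDivisors R) a
        have hbne : (b : R) ≠ 0 := nonZeroDivisors.coe_ne_zero b
        refine ⟨(b : R) * d, mul_ne_zero hbne hd,
          IsLocalization.integerNormalization (nonZeroDivisors R) a * s,
          I.mul_mem_left _ hs, ?_⟩
        have hb' : (IsLocalization.integerNormalization (nonZeroDivisors R) a).map
            (algebraMap R K) = Polynomial.C (algebraMap R K (b : R)) * a := by
          rw [hb, Algebra.smul_def, Polynomial.algebraMap_apply]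
        rw [Polynomial.map_mul, hb', hm]
        rw [smul_eq_mul]
        simp only [map_mul, Polynomial.C_mul]
        ring
  -- `J` pulls back to `I`
  have hcomap : ∀ q : Polynomial R, φ q ∈ J → q ∈ I := by
    intro q hq
    obtain ⟨d, hd, s, hsI, hm⟩ := hclear _ hq
    have : φ (Polynomial.C d * q) = φ s := by
      simp only [hφ, map_mul, Polynomial.coe_mapRingHom, Polynomial.map_C]
      exact hm.symm
    have heq : Polynomial.C d * q = s := hφinj this
    have hmemI : Polynomial.C d * q ∈ I := heq ▸ hsI
    rcases hIprime.mem_or_mem hmemI with h | h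
    · exact absurd (hcap d h) hd
    · exact h
  -- `J` is principal
  obtain ⟨g, hg⟩ : Submodule.IsPrincipal J := IsPrincipalIdealRing.principal J
  rw [Ideal.submodule_span_eq] at hg
  obtain ⟨Pw, hPwne, hPw⟩ := halg
  have hPwI : Pw ∈ I := (hmem Pw).mpr hPw
  have hφPw : φ Pw ∈ J := Ideal.mem_map_of_mem φ hPwI
  have hgne : g ≠ 0 := by
    rintro rfl
    have h0 : φ Pw = 0 := by
      rwa [hg, Ideal.span_singleton_eq_bot.mpr rfl, Ideal.mem_bot] at hφPw
    exact hPwne (hφinj (h0.trans (map_zero φ).symm))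
  -- clear denominators of the generator
  set g' : Polynomial R := IsLocalization.integerNormalization (nonZeroDivisors R) g with hg'
  obtain ⟨b, hb⟩ := IsLocalization.integerNormalization_map_to_map (nonZeroDivisors R) g
  have hbne : (b : R) ≠ 0 := nonZeroDivisors.coe_ne_zero b
  have hmapg' : Polynomial.map (algebraMap R K) g'
      = Polynomial.C (algebraMap R K (b : R)) * g := by
    rw [hg', hb, Algebra.smul_def, Polynomial.algebraMap_apply]
  have hg'I : g' ∈ I := by
    apply hcomap
    have hgJ : g ∈ J := by rw [hg]; exact Ideal.mem_span_singleton_self g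
    have hφg' : φ g' = Polynomial.C (algebraMap R K (b : R)) * g := hmapg'
    rw [hφg']
    exact J.mul_mem_left _ hgJ
  have hg'ne : g' ≠ 0 := by
    rw [hg']
    exact fun h => hgne (IsFractionRing.integerNormalization_eq_zero_iff.mp h)
  -- the primitive part is the generator of `I`
  set p : Polynomial R := g'.primPart with hp
  have hpprim : p.IsPrimitive := g'.isPrimitive_primPart
  have hcontne : g'.content ≠ 0 := fun h => hg'ne (Polynomial.content_eq_zero_iff.mp h)
  have hpI : p ∈ I := by
    have hsplit : Polynomial.C g'.content * p = g' := (g'.eq_C_content_mul_primPart).symm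
    have : Polynomial.C g'.content * p ∈ I := by rw [hsplit]; exact hg'I
    rcases hIprime.mem_or_mem this with h | h
    · exact absurd (hcap _ h) hcontne
    · exact h
  have hpne : p ≠ 0 := g'.primPart_ne_zero
  -- `C` of a nonzero element of `R` maps to a unit in `K[X]`
  have hCunit : ∀ d : R, d ≠ 0 → IsUnit (Polynomial.C (algebraMap R K d)) := by
    intro d hd
    refine Polynomial.isUnit_C.mpr (isUnit_iff_ne_zero.mpr ?_)
    simpa using (map_ne_zero_iff _ (IsFractionRing.injective R K)).mpr hd
  -- main divisibility characterization
  have hdvd : ∀ q : Polynomial R, q ∈ I ↔ p ∣ q := by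
    intro q
    constructor
    · intro hqI
      by_cases hq0 : q = 0
      · exact hq0 ▸ dvd_zero p
      have hφq : φ q ∈ J := Ideal.mem_map_of_mem φ hqI
      rw [hg, Ideal.mem_span_singleton] at hφq
      have hφq' : g ∣ Polynomial.map (algebraMap R K) q := hφq
      -- `map g' ∣ map q` since `map g'` is a unit multiple of `g`
      have h1 : Polynomial.map (algebraMap R K) g' ∣ Polynomial.map (algebraMap R K) q := by
        rw [hmapg']
        exact ((hCunit _ hbne).mul_left_dvd).mpr hφq'
      -- hence `map p ∣ map q`
      have h2 : Polynomial.map (algebraMap R K) p ∣ Polynomial.map (algebraMap R K) q := by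
        refine dvd_trans ?_ h1
        have : g' = Polynomial.C g'.content * p := g'.eq_C_content_mul_primPart
        rw [this, Polynomial.map_mul]
        exact dvd_mul_left _ _
      -- reduce to primitive parts and apply Gauss's lemma
      have h3 : Polynomial.map (algebraMap R K) p
          ∣ Polynomial.map (algebraMap R K) q.primPart := by
        have hq' : q = Polynomial.C q.content * q.primPart := q.eq_C_content_mul_primPart
        have hcq : q.content ≠ 0 := fun h => hq0 (Polynomial.content_eq_zero_iff.mp h)
        have : Polynomial.map (algebraMap R K) q
            = Polynomial.C (algebraMap R K q.content)
              * Polynomial.map (algebraMap R K) q.primPart := by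
          conv_lhs => rw [hq']
          rw [Polynomial.map_mul, Polynomial.map_C]
        rw [this] at h2
        exact (IsUnit.dvd_mul_left (hCunit _ hcq)).mp h2
      have h4 : p ∣ q.primPart :=
        hpprim.dvd_of_fraction_map_dvd_fraction_map h3
      exact h4.trans (q.primPart_dvd)
    · intro hdq
      obtain ⟨r, rfl⟩ := hdq
      exact I.mul_mem_right r hpI
  -- assemble the conclusion
  refine ⟨p, hpne, fun P => (hmem P).symm.trans (hdvd P), ?_⟩
  intro P₁ hP₁
  have hP₁I : AnnihilatesOn n U f P₁ := (hP₁ P₁).mpr dvd_rfl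
  have h1 : p ∣ P₁ := (hdvd P₁).mp ((hmem P₁).mpr hP₁I)
  have h2 : P₁ ∣ p := (hP₁ p).mp ((hmem p).mp hpI)
  have hassoc : Associated p P₁ := associated_of_dvd_dvd h1 h2
  obtain ⟨u, hu⟩ := hassoc
  have huu : IsUnit (u : Polynomial R) := u.isUnit
  obtain ⟨r, hr_unit, hr⟩ := Polynomial.isUnit_iff.mp huu
  obtain ⟨c, hc, rfl⟩ := Stmt5Aux.mv_isUnit hr_unit
  refine ⟨c, hc, ?_⟩
  rw [← hu, ← hr]
  ring
end

section
/- Let A, B ⊂ ℝᵐ be nonempty bounded convex open sets. Then the Hausdorff distance between A and B equals the Hausdorff distance between their topological boundaries: d_H(A, B) = d_H(∂A, ∂B). -/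
section Aux

open Metric Set

variable {E : Type*} [NormedAddCommGroup E] [NormedSpace ℝ E]

/-- infDist to a convex set is "convex" along segments. -/
lemma aux_infDist_segment_le {C : Set E} (hC : Convex ℝ C) (hne : C.Nonempty)
    {x z a : E} (ha : a ∈ segment ℝ x z) :
    infDist a C ≤ max (infDist x C) (infDist z C) := by
  obtain ⟨t₁, t₂, ht₁, ht₂, hsum, rfl⟩ := ha
  refine le_of_forall_sub_le fun ε hε => ?_
  rw [sub_le_iff_le_add]
  obtain ⟨b₁, hb₁, hd₁⟩ := (infDist_lt_iff hne).1
    (lt_add_of_pos_right (infDist x C) hε)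
  obtain ⟨b₂, hb₂, hd₂⟩ := (infDist_lt_iff hne).1
    (lt_add_of_pos_right (infDist z C) hε)
  have hmem : t₁ • b₁ + t₂ • b₂ ∈ C := hC hb₁ hb₂ ht₁ ht₂ hsum
  calc infDist (t₁ • x + t₂ • z) C ≤ dist (t₁ • x + t₂ • z) (t₁ • b₁ + t₂ • b₂) :=
        infDist_le_dist_of_mem hmem
    _ ≤ dist (t₁ • x) (t₁ • b₁) + dist (t₂ • z) (t₂ • b₂) := dist_add_add_le _ _ _ _
    _ = t₁ * dist x b₁ + t₂ * dist z b₂ := by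
        rw [dist_smul₀, dist_smul₀, Real.norm_of_nonneg ht₁, Real.norm_of_nonneg ht₂]
    _ ≤ t₁ * (max (infDist x C) (infDist z C) + ε) + t₂ * (max (infDist x C) (infDist z C) + ε) := by
        gcongr
        · exact hd₁.le.trans (by gcongr; exact le_max_left _ _)
        · exact hd₂.le.trans (by gcongr; exact le_max_right _ _)
    _ = max (infDist x C) (infDist z C) + ε := by rw [← add_mul, hsum, one_mul]

lemma aux_exists_frontier_segment [Nontrivial E] {A : Set E}
    (hAbd : Bornology.IsBounded A) (hAopen : IsOpen A) {a : E} (ha : a ∈ A) :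
    ∃ x ∈ frontier A, ∃ z ∈ frontier A, a ∈ segment ℝ x z := by
  obtain ⟨v, hv⟩ := exists_ne (0 : E)
  have hv' : (0:ℝ) < ‖v‖ := norm_pos_iff.2 hv
  set S : Set ℝ := {t : ℝ | a + t • v ∈ closure A} with hS
  have hcont : Continuous fun t : ℝ => a + t • v := by continuity
  have hS0 : (0:ℝ) ∈ S := by
    simp only [hS, mem_setOf_eq, zero_smul, add_zero]
    exact subset_closure ha
  have hScl : IsClosed S := isClosed_closure.preimage hcont
  obtain ⟨R, hR⟩ := hAbd.closure.subset_closedBall 0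
  have hSbd : ∀ t ∈ S, |t| ≤ (R + ‖a‖) / ‖v‖ := by
    intro t ht
    have h1 : ‖a + t • v‖ ≤ R := by simpa [dist_eq_norm] using hR ht
    have h2 : ‖t • v‖ ≤ R + ‖a‖ := by
      have h3 := norm_sub_le (a + t • v) a
      rw [add_sub_cancel_left] at h3
      linarith
    rw [norm_smul, Real.norm_eq_abs] at h2
    rw [le_div_iff₀ hv']
    linarith
  have hbddA : BddAbove S := ⟨(R + ‖a‖) / ‖v‖, fun t ht => (le_abs_self t).trans (hSbd t ht)⟩
  have hbddB : BddBelow S := ⟨-((R + ‖a‖) / ‖v‖), fun t ht => neg_le_of_abs_le (hSbd t ht)⟩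
  set T := sSup S with hTdef
  set T' := sInf S with hT'def
  have hTS : T ∈ S := hScl.csSup_mem ⟨0, hS0⟩ hbddA
  have hT'S : T' ∈ S := hScl.csInf_mem ⟨0, hS0⟩ hbddB
  have hT0 : 0 ≤ T := le_csSup hbddA hS0
  have hT'0 : T' ≤ 0 := csInf_le hbddB hS0
  have hfr : frontier A = closure A \ A := by
    rw [frontier, hAopen.interior_eq]
  -- a + T • v is not in A
  have hnotA : ∀ t : ℝ, (∀ s ∈ S, s ≤ t) → a + t • v ∉ A → False → True := fun _ _ _ _ => trivial
  have hxA : a + T • v ∉ A := by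
    intro hmem
    have hopen : IsOpen ((fun t : ℝ => a + t • v) ⁻¹' A) := hAopen.preimage hcont
    obtain ⟨δ, hδ, hball⟩ := Metric.isOpen_iff.1 hopen T hmem
    have : T + δ/2 ∈ S := by
      refine subset_closure (hball ?_)
      simp only [mem_ball, Real.dist_eq]
      have he : T + δ/2 - T = δ/2 := by ring
      rw [he, abs_of_nonneg (by linarith)]
      linarith
    have := le_csSup hbddA this
    linarith
  have hzA : a + T' • v ∉ A := by
    intro hmem
    have hopen : IsOpen ((fun t : ℝ => a + t • v) ⁻¹' A) := hAopen.preimage hcont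
    obtain ⟨δ, hδ, hball⟩ := Metric.isOpen_iff.1 hopen T' hmem
    have : T' - δ/2 ∈ S := by
      refine subset_closure (hball ?_)
      simp only [mem_ball, Real.dist_eq]
      have he : T' - δ/2 - T' = -(δ/2) := by ring
      rw [he, abs_of_nonpos (by linarith)]
      linarith
    have := csInf_le hbddB this
    linarith
  have hTpos : 0 < T := by
    rcases hT0.lt_or_eq with h | h
    · exact h
    · exact absurd (by simpa [← h] using ha) hxA
  have hT'neg : T' < 0 := by
    rcases hT'0.lt_or_eq with h | h
    · exact h
    · exact absurd (by simpa [h] using ha) hzA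
  refine ⟨a + T • v, by rw [hfr]; exact ⟨hTS, hxA⟩, a + T' • v, by rw [hfr]; exact ⟨hT'S, hzA⟩, ?_⟩
  have hd : 0 < T - T' := by linarith
  refine ⟨-T' / (T - T'), T / (T - T'), div_nonneg (by linarith) hd.le,
    div_nonneg hTpos.le hd.le, ?_, ?_⟩
  · field_simp
    ring
  · have h1 : (-T' / (T - T')) * T + (T / (T - T')) * T' = 0 := by
      field_simp
      ring
    calc (-T' / (T - T')) • (a + T • v) + (T / (T - T')) • (a + T' • v)
        = ((-T' / (T - T')) + (T / (T - T'))) • a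
          + ((-T' / (T - T')) * T + (T / (T - T')) * T') • v := by
          simp only [smul_add, add_smul, smul_smul]
          abel
      _ = a := by
          rw [h1]
          have : (-T' / (T - T')) + (T / (T - T')) = 1 := by
            field_simp
            ring
          rw [this, one_smul, zero_smul, add_zero]

end Aux

open Metric Set InnerProductSpace

variable {m : ℕ}

local notation "E" => EuclideanSpace ℝ (Fin m)

lemma aux_frontier_le {A B : Set (EuclideanSpace ℝ (Fin m))}
    (hAne : A.Nonempty) (hAconv : Convex ℝ A) (hAopen : IsOpen A)
    (hBne : B.Nonempty) (hBopen : IsOpen B)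
    (hfin : EMetric.hausdorffEdist A B ≠ ⊤)
    {x : EuclideanSpace ℝ (Fin m)} (hx : x ∈ frontier A) :
    infDist x (frontier B) ≤ hausdorffDist A B := by
  set r := hausdorffDist A B with hr
  have hr0 : 0 ≤ r := hausdorffDist_nonneg
  have hxclA : x ∈ closure A := hx.1
  -- infDist x B ≤ r
  have hxB : infDist x B ≤ r := by
    have h0 : infDist x A = 0 := infDist_zero_of_mem_closure hxclA
    have := infDist_le_infDist_add_hausdorffDist (x := x) (s := A) (t := B) hfin
    rwa [h0, zero_add] at this
  by_cases hxc : x ∈ closure B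
  · by_cases hxB' : x ∈ B
    · -- the hard case
      by_contra hcon
      push_neg at hcon
      set s := infDist x (frontier B) with hs
      have hsr : r < s := hcon
      have hs0 : 0 < s := lt_of_le_of_lt hr0 hsr
      -- ball x s ⊆ B
      have hball : ball x s ⊆ B := by
        have hsub : ball x s ⊆ B ∪ (closure B)ᶜ := by
          intro y hy
          by_cases hyB : y ∈ closure B
          · rcases (closure_eq_interior_union_frontier B ▸ hyB) with h | h
            · exact Or.inl (hBopen.interior_eq ▸ h)
            · exact absurd (infDist_le_dist_of_mem h) (by rw [mem_ball, dist_comm] at hy; linarith)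
          · exact Or.inr hyB
        rcases (convex_ball x s).isPreconnected.subset_or_subset hBopen
            isClosed_closure.isOpen_compl
            (disjoint_compl_right.mono_left subset_closure) hsub with h | h
        · exact h
        · exact absurd (h (mem_ball_self hs0)) (by simp [hxc])
      -- supporting hyperplane at x
      have hxnA : x ∉ A := fun h => (hAopen.interior_eq ▸ hx.2) (hAopen.interior_eq ▸ h)
      obtain ⟨f, hf⟩ := geometric_hahn_banach_open_point hAconv hAopen hxnA
      obtain ⟨a₀, ha₀⟩ := hAne
      have hfne : f ≠ 0 := by
        intro h
        have := hf a₀ ha₀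
        rw [h] at this
        simp at this
      set u := (toDual ℝ (EuclideanSpace ℝ (Fin m))).symm f with hu
      have huf : ∀ z, ⟪u, z⟫_ℝ = f z := fun z => toDual_symm_apply
      have hune : u ≠ 0 := by
        intro h
        apply hfne
        ext z
        have := huf z
        rw [h] at this
        simpa using this.symm
      have hun : 0 < ‖u‖ := norm_pos_iff.2 hune
      set n : EuclideanSpace ℝ (Fin m) := ‖u‖⁻¹ • u with hn
      have hnn : ‖n‖ = 1 := by
        rw [hn, norm_smul, norm_inv, norm_norm, inv_mul_cancel₀ hun.ne']
      set s' := (r + s) / 2 with hs'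
      have hs'r : r < s' := by rw [hs']; linarith
      have hs's : s' < s := by rw [hs']; linarith
      set y := x + s' • n with hy
      have hyB : y ∈ B := by
        apply hball
        rw [mem_ball, hy, dist_self_add_left, norm_smul, hnn, mul_one,
          Real.norm_of_nonneg (by linarith)]
        exact hs's
      have hyA : ∀ a ∈ A, s' ≤ dist y a := by
        intro a haA
        have hfa : f a < f x := hf a haA
        have hinner : (s' : ℝ) ≤ ⟪n, y - a⟫_ℝ := by
          have h1 : ⟪n, y - a⟫_ℝ = ⟪n, x - a⟫_ℝ + s' * ⟪n, n⟫_ℝ := by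
            rw [hy]
            rw [show x + s' • n - a = (x - a) + s' • n by abel]
            rw [inner_add_right, real_inner_smul_right]
          have h2 : ⟪n, n⟫_ℝ = 1 := by
            rw [real_inner_self_eq_norm_sq, hnn]; norm_num
          have h3 : (0:ℝ) ≤ ⟪n, x - a⟫_ℝ := by
            rw [hn, real_inner_smul_left, inner_sub_right, huf, huf]
            have : 0 ≤ f x - f a := by linarith
            positivity
          rw [h1, h2, mul_one]
          linarith
        calc (s' : ℝ) ≤ ⟪n, y - a⟫_ℝ := hinner
          _ ≤ ‖n‖ * ‖y - a‖ := real_inner_le_norm n (y - a)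
          _ = dist y a := by rw [hnn, one_mul, dist_eq_norm]
      have h4 : infDist y A ≤ r := by
        rw [hr, hausdorffDist_comm]
        exact infDist_le_hausdorffDist_of_mem hyB (by rwa [EMetric.hausdorffEdist_comm])
      have h5 : infDist y A < s' := lt_of_le_of_lt h4 hs'r
      obtain ⟨a, haA, hda⟩ := (infDist_lt_iff ⟨a₀, ha₀⟩).1 h5
      exact absurd hda (not_lt.2 (hyA a haA))
    · -- x ∈ closure B \ B = frontier B
      have : x ∈ frontier B := by
        rw [frontier, hBopen.interior_eq]; exact ⟨hxc, hxB'⟩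
      rw [infDist_zero_of_mem this]
      exact hr0
  · -- x ∉ closure B : nearest point of closure B is on frontier B
    obtain ⟨b, hbcl, hbd⟩ := isClosed_closure.exists_infDist_eq_dist
      (closure_nonempty_iff.mpr hBne) x
    have hbfr : b ∈ frontier B := by
      rw [frontier, hBopen.interior_eq]
      refine ⟨hbcl, fun hbB => ?_⟩
      obtain ⟨δ, hδ, hballb⟩ := Metric.isOpen_iff.1 hBopen b hbB
      have hxb : x ≠ b := fun h => hxc (h ▸ hbcl)
      have hd0 : 0 < dist x b := dist_pos.2 hxb
      set ε := min (δ / (2 * dist x b)) (1/2 : ℝ) with hε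
      have hε0 : 0 < ε := lt_min (by positivity) (by norm_num)
      have hε1 : ε < 1 := lt_of_le_of_lt (min_le_right _ _) (by norm_num)
      set b' := b + ε • (x - b) with hb'
      have hb'B : b' ∈ B := by
        apply hballb
        rw [mem_ball, hb', dist_self_add_left, norm_smul, Real.norm_of_nonneg hε0.le]
        have h1 : ε ≤ δ / (2 * dist x b) := min_le_left _ _
        have h2 : ‖x - b‖ = dist x b := by rw [dist_eq_norm]
        rw [h2]
        calc ε * dist x b ≤ δ / (2 * dist x b) * dist x b := by
              exact mul_le_mul_of_nonneg_right h1 dist_nonneg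
          _ = δ / 2 := by field_simp
          _ < δ := by linarith
      have hdb' : dist x b' = (1 - ε) * dist x b := by
        rw [hb', dist_eq_norm, show x - (b + ε • (x - b)) = (1 - ε) • (x - b) by
          rw [sub_smul, one_smul]; abel, norm_smul,
          Real.norm_of_nonneg (by linarith), ← dist_eq_norm]
      have hlt : dist x b' < dist x b := by
        rw [hdb']
        nlinarith
      have hge : infDist x (closure B) ≤ dist x b' :=
        infDist_le_dist_of_mem (subset_closure hb'B)
      rw [hbd] at hge
      linarith
    calc infDist x (frontier B) ≤ dist x b := infDist_le_dist_of_mem hbfr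
      _ = infDist x (closure B) := hbd.symm
      _ = infDist x B := infDist_closure
      _ ≤ r := hxB

/-- for nonempty bounded convex open sets `A, B ⊂ ℝᵐ`, the Hausdorff distance
between `A` and `B` equals the Hausdorff distance between their boundaries. -/
theorem stmt_8 (m : ℕ) (A B : Set (EuclideanSpace ℝ (Fin m)))
    (hAne : A.Nonempty) (hAbd : Bornology.IsBounded A) (hAconv : Convex ℝ A)
    (hAopen : IsOpen A)
    (hBne : B.Nonempty) (hBbd : Bornology.IsBounded B) (hBconv : Convex ℝ B)
    (hBopen : IsOpen B) :
    Metric.hausdorffDist A B = Metric.hausdorffDist (frontier A) (frontier B) := by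
  rcases subsingleton_or_nontrivial (EuclideanSpace ℝ (Fin m)) with hsub | hnt
  · have hA : A = Set.univ := hAne.eq_univ
    have hB : B = Set.univ := hBne.eq_univ
    rw [hA, hB, frontier_univ]
    simp [Metric.hausdorffDist_self_zero]
  · have hAnu : A ≠ Set.univ := fun h =>
      NormedSpace.unbounded_univ ℝ (EuclideanSpace ℝ (Fin m)) (h ▸ hAbd)
    have hBnu : B ≠ Set.univ := fun h =>
      NormedSpace.unbounded_univ ℝ (EuclideanSpace ℝ (Fin m)) (h ▸ hBbd)
    have hfAne : (frontier A).Nonempty := nonempty_frontier_iff.2 ⟨hAne, hAnu⟩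
    have hfBne : (frontier B).Nonempty := nonempty_frontier_iff.2 ⟨hBne, hBnu⟩
    have hfAbd : Bornology.IsBounded (frontier A) := hAbd.closure.subset frontier_subset_closure
    have hfBbd : Bornology.IsBounded (frontier B) := hBbd.closure.subset frontier_subset_closure
    have hfinAB : EMetric.hausdorffEdist A B ≠ ⊤ :=
      Metric.hausdorffEdist_ne_top_of_nonempty_of_bounded hAne hBne hAbd hBbd
    have hfinBA : EMetric.hausdorffEdist B A ≠ ⊤ := by
      rwa [show EMetric.hausdorffEdist B A = EMetric.hausdorffEdist A B from EMetric.hausdorffEdist_comm]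
    have hfinF : EMetric.hausdorffEdist (frontier A) (frontier B) ≠ ⊤ :=
      Metric.hausdorffEdist_ne_top_of_nonempty_of_bounded hfAne hfBne hfAbd hfBbd
    have hfinF' : EMetric.hausdorffEdist (frontier B) (frontier A) ≠ ⊤ := by
      rwa [show EMetric.hausdorffEdist (frontier B) (frontier A) = EMetric.hausdorffEdist (frontier A) (frontier B) from EMetric.hausdorffEdist_comm]
    -- from a frontier point, distance to the other set is controlled by distances of frontiers
    have hkey : ∀ (C D : Set (EuclideanSpace ℝ (Fin m))), Bornology.IsBounded C → IsOpen C →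
        Convex ℝ D → D.Nonempty → (frontier D).Nonempty →
        EMetric.hausdorffEdist (frontier C) (frontier D) ≠ ⊤ →
        ∀ a ∈ C, Metric.infDist a D ≤ Metric.hausdorffDist (frontier C) (frontier D) := by
      intro C D hCbd hCopen hDconv hDne hfDne hfinCD a ha
      obtain ⟨x, hx, z, hz, hseg⟩ := aux_exists_frontier_segment hCbd hCopen ha
      have hstep : ∀ w ∈ frontier C,
          Metric.infDist w D ≤ Metric.hausdorffDist (frontier C) (frontier D) := by
        intro w hw
        calc Metric.infDist w D = Metric.infDist w (closure D) := Metric.infDist_closure.symm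
          _ ≤ Metric.infDist w (frontier D) :=
              Metric.infDist_le_infDist_of_subset frontier_subset_closure hfDne
          _ ≤ Metric.hausdorffDist (frontier C) (frontier D) :=
              Metric.infDist_le_hausdorffDist_of_mem hw hfinCD
      calc Metric.infDist a D ≤ max (Metric.infDist x D) (Metric.infDist z D) :=
            aux_infDist_segment_le hDconv hDne hseg
        _ ≤ Metric.hausdorffDist (frontier C) (frontier D) :=
            max_le (hstep x hx) (hstep z hz)
    refine le_antisymm ?_ ?_
    · refine Metric.hausdorffDist_le_of_infDist Metric.hausdorffDist_nonneg
        (fun a ha => hkey A B hAbd hAopen hBconv hBne hfBne hfinF a ha) (fun b hb => ?_)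
      rw [Metric.hausdorffDist_comm]
      exact hkey B A hBbd hBopen hAconv hAne hfAne hfinF' b hb
    · refine Metric.hausdorffDist_le_of_infDist Metric.hausdorffDist_nonneg
        (fun x hx => aux_frontier_le hAne hAconv hAopen hBne hBopen hfinAB hx) (fun z hz => ?_)
      rw [Metric.hausdorffDist_comm]
      exact aux_frontier_le hBne hBconv hBopen hAne hAopen hfinBA hz
end

section
/- Let q(x) = ∑ x_i² − ∑ y_j² + ∑ u_k + c be a polynomial on ℝ^N in disjoint groups of variables x_i, y_j, u_k (possibly with additional absent variables v_l), where the x-group is nonempty, c ∈ ℝ, and at least one of the groups {y_j}, {u_k}, {v_l} is nonempty. Then every connected component of the set of regular points of {q = 0} is unbounded. -/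
open Set Bornology ContinuousLinearMap

noncomputable def Dq {N : ℕ} (X Y U : Finset (Fin N)) (x : Fin N → ℝ) :
    (Fin N → ℝ) →L[ℝ] ℝ :=
  (∑ i ∈ X, (2 * x i) • ContinuousLinearMap.proj (R := ℝ) (φ := fun _ : Fin N => ℝ) i)
  - (∑ j ∈ Y, (2 * x j) • ContinuousLinearMap.proj (R := ℝ) (φ := fun _ : Fin N => ℝ) j)
  + ∑ k ∈ U, ContinuousLinearMap.proj (R := ℝ) (φ := fun _ : Fin N => ℝ) k

theorem hasFDerivAt_q {N : ℕ} (X Y U : Finset (Fin N)) (c : ℝ) (x : Fin N → ℝ) :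
    HasFDerivAt (fun y : Fin N → ℝ =>
      (∑ i ∈ X, y i ^ 2) - (∑ j ∈ Y, y j ^ 2) + (∑ k ∈ U, y k) + c) (Dq X Y U x) x := by
  have h1 : ∀ i : Fin N, HasFDerivAt (fun y : Fin N → ℝ => y i ^ 2)
      ((2 * x i) • ContinuousLinearMap.proj (R := ℝ) (φ := fun _ : Fin N => ℝ) i) x := by
    intro i
    have h := (hasFDerivAt_apply (𝕜 := ℝ) i x).mul (hasFDerivAt_apply (𝕜 := ℝ) i x)
    have heq : ((fun y : Fin N → ℝ => y i) * fun y : Fin N → ℝ => y i) = fun y : Fin N → ℝ => y i ^ 2 := by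
      funext y; simp only [Pi.mul_apply]; ring
    rw [heq] at h
    refine h.congr_fderiv ?_
    ext v
    simp [two_mul, mul_comm, mul_add, add_mul]
    ring
  have hX : HasFDerivAt (fun y : Fin N → ℝ => ∑ i ∈ X, y i ^ 2)
      (∑ i ∈ X, (2 * x i) • ContinuousLinearMap.proj (R := ℝ) (φ := fun _ : Fin N => ℝ) i) x :=
    HasFDerivAt.fun_sum fun i _ => h1 i
  have hY : HasFDerivAt (fun y : Fin N → ℝ => ∑ j ∈ Y, y j ^ 2)
      (∑ j ∈ Y, (2 * x j) • ContinuousLinearMap.proj (R := ℝ) (φ := fun _ : Fin N => ℝ) j) x :=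
    HasFDerivAt.fun_sum fun j _ => h1 j
  have hU : HasFDerivAt (fun y : Fin N → ℝ => ∑ k ∈ U, y k)
      (∑ k ∈ U, ContinuousLinearMap.proj (R := ℝ) (φ := fun _ : Fin N => ℝ) k) x :=
    HasFDerivAt.fun_sum fun k _ => hasFDerivAt_apply (𝕜 := ℝ) k x
  exact ((hX.sub hY).add hU).add_const c

theorem Dq_single {N : ℕ} (X Y U : Finset (Fin N)) (x : Fin N → ℝ) (l : Fin N) :
    Dq X Y U x (Pi.single l 1) =
      (if l ∈ X then 2 * x l else 0) - (if l ∈ Y then 2 * x l else 0)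
        + (if l ∈ U then 1 else 0) := by
  simp [Dq, ContinuousLinearMap.sum_apply, Pi.single_apply, Finset.sum_ite_eq', mul_comm]

theorem unbounded_of_path {N : ℕ} (S : Set (Fin N → ℝ)) (x : Fin N → ℝ)
    (γ : ℝ → Fin N → ℝ) (hc : Continuous γ) (h0 : γ 0 = x) (hmem : ∀ t, γ t ∈ S)
    (hub : ∀ C : ℝ, ∃ t, C < ‖γ t‖) :
    ¬ IsBounded (connectedComponentIn S x) := by
  intro hB
  obtain ⟨C, hC⟩ := (isBounded_iff_forall_norm_le).1 hB
  obtain ⟨t, ht⟩ := hub C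
  have hsub : range γ ⊆ connectedComponentIn S x :=
    (isConnected_range hc).isPreconnected.subset_connectedComponentIn
      ⟨0, h0⟩ (range_subset_iff.2 hmem)
  exact absurd (hC _ (hsub ⟨t, rfl⟩)) (not_le.2 ht)

/-- let `q(x) = ∑_{i∈X} x_i² − ∑_{j∈Y} x_j² + ∑_{k∈U} x_k + c` on `ℝ^N`, where
`X, Y, U` are pairwise disjoint groups of variables, `X` is nonempty, and at least one of the
groups `Y`, `U`, or the group of absent variables is nonempty. Then every connected component
of the set of regular points of `{q = 0}` is unbounded. -/
theorem stmt_9 (N : ℕ) (X Y U : Finset (Fin N)) (c : ℝ)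
    (hXY : Disjoint X Y) (hXU : Disjoint X U) (hYU : Disjoint Y U)
    (hX : X.Nonempty)
    (hother : Y.Nonempty ∨ U.Nonempty ∨ X ∪ Y ∪ U ≠ Finset.univ) :
    ∀ x ∈ {x : Fin N → ℝ |
        (∑ i ∈ X, x i ^ 2) - (∑ j ∈ Y, x j ^ 2) + (∑ k ∈ U, x k) + c = 0 ∧
        fderiv ℝ (fun y : Fin N → ℝ =>
          (∑ i ∈ X, y i ^ 2) - (∑ j ∈ Y, y j ^ 2) + (∑ k ∈ U, y k) + c) x ≠ 0},
      ¬ Bornology.IsBounded (connectedComponentIn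
        {x : Fin N → ℝ |
          (∑ i ∈ X, x i ^ 2) - (∑ j ∈ Y, x j ^ 2) + (∑ k ∈ U, x k) + c = 0 ∧
          fderiv ℝ (fun y : Fin N → ℝ =>
            (∑ i ∈ X, y i ^ 2) - (∑ j ∈ Y, y j ^ 2) + (∑ k ∈ U, y k) + c) x ≠ 0} x) := by
  intro x hx
  obtain ⟨hq0, hD0⟩ := hx
  obtain ⟨i, hiX⟩ := hX
  have hfd : ∀ z : Fin N → ℝ, fderiv ℝ (fun y : Fin N → ℝ =>
      (∑ i ∈ X, y i ^ 2) - (∑ j ∈ Y, y j ^ 2) + (∑ k ∈ U, y k) + c) z = Dq X Y U z :=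
    fun z => (hasFDerivAt_q X Y U c z).fderiv
  rcases hother with hY | hU | hV
  · -- Case Y nonempty
    obtain ⟨j, hjY⟩ := hY
    have hij : i ≠ j := fun h => (Finset.disjoint_left.1 hXY hiX) (h ▸ hjY)
    set g : ℝ → ℝ → ℝ := fun a t => (if a < 0 then -1 else 1) * Real.sqrt (a ^ 2 + t ^ 2)
      with hg
    have hgsq : ∀ a t, g a t ^ 2 = a ^ 2 + t ^ 2 := by
      intro a t
      have h1 : (0:ℝ) ≤ a ^ 2 + t ^ 2 := by positivity
      simp only [hg, mul_pow, Real.sq_sqrt h1]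
      split <;> ring
    have hg0 : ∀ a, g a 0 = a := by
      intro a
      simp only [hg]
      rcases lt_or_ge a 0 with h | h
      · rw [if_pos h]
        rw [show a ^ 2 + 0 ^ 2 = a ^ 2 by ring, Real.sqrt_sq_eq_abs, abs_of_neg h]; ring
      · rw [if_neg (not_lt.2 h)]
        rw [show a ^ 2 + 0 ^ 2 = a ^ 2 by ring, Real.sqrt_sq_eq_abs, abs_of_nonneg h]; ring
    have hgcont : ∀ a, Continuous fun t => g a t := by
      intro a
      exact continuous_const.mul (Real.continuous_sqrt.comp (by continuity))
    set γ : ℝ → Fin N → ℝ := fun t l =>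
      if l = j then g (x j) t else if l = i then g (x i) t else x l with hγ
    have hγcont : Continuous γ := by
      apply continuous_pi; intro l
      simp only [hγ]
      split
      · exact hgcont _
      · split
        · exact hgcont _
        · exact continuous_const
    have hγ0 : γ 0 = x := by
      funext l; simp only [hγ]
      split <;> rename_i h
      · rw [h, hg0]
      · split <;> rename_i h2
        · rw [h2, hg0]
        · rfl
    have hγi : ∀ t, γ t i = g (x i) t := by
      intro t; simp [hγ, hij]
    have hγj : ∀ t, γ t j = g (x j) t := by intro t; simp only [hγ, if_pos rfl]
    have hsumX : ∀ t, ∑ l ∈ X, γ t l ^ 2 = (∑ l ∈ X, x l ^ 2) + t ^ 2 := by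
      intro t
      rw [← Finset.sum_erase_add X _ hiX, ← Finset.sum_erase_add X (fun l => x l ^ 2) hiX]
      have : ∑ l ∈ X.erase i, γ t l ^ 2 = ∑ l ∈ X.erase i, x l ^ 2 := by
        apply Finset.sum_congr rfl
        intro l hl
        have hli : l ≠ i := Finset.ne_of_mem_erase hl
        have hlj : l ≠ j := fun h =>
          (Finset.disjoint_left.1 hXY (Finset.mem_of_mem_erase hl)) (h ▸ hjY)
        simp only [hγ, if_neg hlj, if_neg hli]
      rw [this, hγi, hgsq]; ring
    have hsumY : ∀ t, ∑ l ∈ Y, γ t l ^ 2 = (∑ l ∈ Y, x l ^ 2) + t ^ 2 := by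
      intro t
      rw [← Finset.sum_erase_add Y _ hjY, ← Finset.sum_erase_add Y (fun l => x l ^ 2) hjY]
      have : ∑ l ∈ Y.erase j, γ t l ^ 2 = ∑ l ∈ Y.erase j, x l ^ 2 := by
        apply Finset.sum_congr rfl
        intro l hl
        have hlj : l ≠ j := Finset.ne_of_mem_erase hl
        have hli : l ≠ i := fun h =>
          (Finset.disjoint_left.1 hXY hiX) (h ▸ Finset.mem_of_mem_erase hl)
        simp only [hγ, if_neg hlj, if_neg hli]
      rw [this, hγj, hgsq]; ring
    have hsumU : ∀ t, ∑ l ∈ U, γ t l = ∑ l ∈ U, x l := by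
      intro t
      apply Finset.sum_congr rfl
      intro l hl
      have hli : l ≠ i := fun h => (Finset.disjoint_left.1 hXU hiX) (h ▸ hl)
      have hlj : l ≠ j := fun h => (Finset.disjoint_left.1 hYU hjY) (h ▸ hl)
      simp only [hγ, if_neg hlj, if_neg hli]
    apply unbounded_of_path _ x γ hγcont hγ0
    · intro t
      constructor
      · rw [hsumX, hsumY, hsumU]; linarith [hq0]
      · rcases eq_or_ne t 0 with rfl | ht
        · rw [hγ0]; exact hD0
        · rw [hfd]
          intro h
          have := congrArg (fun L : (Fin N → ℝ) →L[ℝ] ℝ => L (Pi.single j 1)) h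
          simp only [ContinuousLinearMap.zero_apply] at this
          rw [Dq_single] at this
          have hjX : j ∉ X := fun h => (Finset.disjoint_left.1 hXY h) hjY
          have hjU : j ∉ U := fun h => (Finset.disjoint_left.1 hYU hjY) h
          rw [if_neg hjX, if_pos hjY, if_neg hjU] at this
          have hne : γ t j ≠ 0 := by
            intro h0
            have h1 := hgsq (x j) t
            rw [← hγj, h0] at h1
            have h2 : 0 < t ^ 2 := by positivity
            nlinarith [sq_nonneg (x j)]
          apply hne
          have : 2 * γ t j = 0 := by linarith
          linarith
    · intro C
      refine ⟨|C| + 1, ?_⟩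
      have h1 : |γ (|C| + 1) j| = Real.sqrt (x j ^ 2 + (|C| + 1) ^ 2) := by
        rw [hγj]
        simp only [hg, abs_mul]
        have : |Real.sqrt (x j ^ 2 + (|C| + 1) ^ 2)| = Real.sqrt (x j ^ 2 + (|C| + 1) ^ 2) :=
          abs_of_nonneg (Real.sqrt_nonneg _)
        rw [this]
        split <;> simp
      have h2 : Real.sqrt ((|C| + 1) ^ 2) ≤ Real.sqrt (x j ^ 2 + (|C| + 1) ^ 2) :=
        Real.sqrt_le_sqrt (by nlinarith [sq_nonneg (x j)])
      rw [Real.sqrt_sq (by positivity)] at h2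
      have h3 : |γ (|C| + 1) j| ≤ ‖γ (|C| + 1)‖ := by
        simpa [Real.norm_eq_abs] using norm_le_pi_norm (γ (|C| + 1)) j
      have hC : C ≤ |C| := le_abs_self C
      rw [h1] at h3
      linarith
  · -- Case U nonempty
    obtain ⟨k, hkU⟩ := hU
    have hik : i ≠ k := fun h => (Finset.disjoint_left.1 hXU hiX) (h ▸ hkU)
    set γ : ℝ → Fin N → ℝ := fun t l =>
      if l = k then x k - (2 * x i * t + t ^ 2) else if l = i then x i + t else x l with hγ
    have hγcont : Continuous γ := by
      apply continuous_pi; intro l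
      simp only [hγ]
      split
      · fun_prop
      · split
        · fun_prop
        · exact continuous_const
    have hγ0 : γ 0 = x := by
      funext l; simp only [hγ]
      split <;> rename_i h
      · rw [h]; ring
      · split <;> rename_i h2
        · rw [h2]; ring
        · rfl
    have hγi : ∀ t, γ t i = x i + t := by
      intro t; simp [hγ, hik]
    have hγk : ∀ t, γ t k = x k - (2 * x i * t + t ^ 2) := by
      intro t; simp only [hγ, if_pos rfl]
    have hsumX : ∀ t, ∑ l ∈ X, γ t l ^ 2 = (∑ l ∈ X, x l ^ 2) + (2 * x i * t + t ^ 2) := by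
      intro t
      rw [← Finset.sum_erase_add X _ hiX, ← Finset.sum_erase_add X (fun l => x l ^ 2) hiX]
      have : ∑ l ∈ X.erase i, γ t l ^ 2 = ∑ l ∈ X.erase i, x l ^ 2 := by
        apply Finset.sum_congr rfl
        intro l hl
        have hli : l ≠ i := Finset.ne_of_mem_erase hl
        have hlk : l ≠ k := fun h =>
          (Finset.disjoint_left.1 hXU (Finset.mem_of_mem_erase hl)) (h ▸ hkU)
        simp only [hγ, if_neg hlk, if_neg hli]
      rw [this, hγi]; ring
    have hsumY : ∀ t, ∑ l ∈ Y, γ t l ^ 2 = ∑ l ∈ Y, x l ^ 2 := by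
      intro t
      apply Finset.sum_congr rfl
      intro l hl
      have hli : l ≠ i := fun h => (Finset.disjoint_left.1 hXY hiX) (h ▸ hl)
      have hlk : l ≠ k := fun h => (Finset.disjoint_left.1 hYU hl) (h ▸ hkU)
      simp only [hγ, if_neg hlk, if_neg hli]
    have hsumU : ∀ t, ∑ l ∈ U, γ t l = (∑ l ∈ U, x l) - (2 * x i * t + t ^ 2) := by
      intro t
      rw [← Finset.sum_erase_add U _ hkU, ← Finset.sum_erase_add U (fun l => x l) hkU]
      have : ∑ l ∈ U.erase k, γ t l = ∑ l ∈ U.erase k, x l := by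
        apply Finset.sum_congr rfl
        intro l hl
        have hlk : l ≠ k := Finset.ne_of_mem_erase hl
        have hli : l ≠ i := fun h =>
          (Finset.disjoint_left.1 hXU hiX) (h ▸ Finset.mem_of_mem_erase hl)
        simp only [hγ, if_neg hlk, if_neg hli]
      rw [this, hγk]; ring
    apply unbounded_of_path _ x γ hγcont hγ0
    · intro t
      constructor
      · rw [hsumX, hsumY, hsumU]; linarith [hq0]
      · rw [hfd]
        intro h
        have := congrArg (fun L : (Fin N → ℝ) →L[ℝ] ℝ => L (Pi.single k 1)) h
        simp only [ContinuousLinearMap.zero_apply] at this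
        rw [Dq_single] at this
        have hkX : k ∉ X := fun h => (Finset.disjoint_left.1 hXU h) hkU
        have hkY : k ∉ Y := fun h => (Finset.disjoint_left.1 hYU h) hkU
        rw [if_neg hkX, if_neg hkY, if_pos hkU] at this
        norm_num at this
    · intro C
      refine ⟨|C| + |x i| + 1, ?_⟩
      have h3 : |γ (|C| + |x i| + 1) i| ≤ ‖γ (|C| + |x i| + 1)‖ := by
        simpa [Real.norm_eq_abs] using norm_le_pi_norm (γ (|C| + |x i| + 1)) i
      rw [hγi] at h3
      have h4 : |C| + 1 ≤ |x i + (|C| + |x i| + 1)| := by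
        have h5 : (0:ℝ) ≤ |C| := abs_nonneg C
        have h6 := neg_abs_le (x i)
        have h7 : 0 ≤ x i + (|C| + |x i| + 1) := by linarith
        rw [abs_of_nonneg h7]; linarith
      have hC : C ≤ |C| := le_abs_self C
      linarith
  · -- Case free variable
    have : ∃ l, l ∉ X ∪ Y ∪ U := by
      by_contra h
      push_neg at h
      exact hV (Finset.eq_univ_iff_forall.2 h)
    obtain ⟨l, hl⟩ := this
    simp only [Finset.mem_union, not_or] at hl
    obtain ⟨⟨hlX, hlY⟩, hlU⟩ := hl
    set γ : ℝ → Fin N → ℝ := fun t m => if m = l then x l + t else x m with hγ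
    have hγcont : Continuous γ := by
      apply continuous_pi; intro m
      simp only [hγ]
      split
      · fun_prop
      · exact continuous_const
    have hγ0 : γ 0 = x := by
      funext m; simp only [hγ]
      split <;> rename_i h
      · rw [h]; ring
      · rfl
    have hγl : ∀ t, γ t l = x l + t := by intro t; simp only [hγ, if_pos rfl]
    have heqcoord : ∀ t m, m ≠ l → γ t m = x m := by
      intro t m hm; simp only [hγ, if_neg hm]
    have hsumX : ∀ t, ∑ m ∈ X, γ t m ^ 2 = ∑ m ∈ X, x m ^ 2 := fun t =>
      Finset.sum_congr rfl fun m hm => by rw [heqcoord t m (fun h => hlX (h ▸ hm))]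
    have hsumY : ∀ t, ∑ m ∈ Y, γ t m ^ 2 = ∑ m ∈ Y, x m ^ 2 := fun t =>
      Finset.sum_congr rfl fun m hm => by rw [heqcoord t m (fun h => hlY (h ▸ hm))]
    have hsumU : ∀ t, ∑ m ∈ U, γ t m = ∑ m ∈ U, x m := fun t =>
      Finset.sum_congr rfl fun m hm => by rw [heqcoord t m (fun h => hlU (h ▸ hm))]
    have hDeq : ∀ t, Dq X Y U (γ t) = Dq X Y U x := by
      intro t
      unfold Dq
      congr 2
      · exact Finset.sum_congr rfl fun m hm => by
          rw [heqcoord t m (fun h => hlX (h ▸ hm))]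
      · exact Finset.sum_congr rfl fun m hm => by
          rw [heqcoord t m (fun h => hlY (h ▸ hm))]
    apply unbounded_of_path _ x γ hγcont hγ0
    · intro t
      constructor
      · rw [hsumX, hsumY, hsumU]; exact hq0
      · rw [hfd, hDeq, ← hfd]
        exact hD0
    · intro C
      refine ⟨|C| + |x l| + 1, ?_⟩
      have h3 : |γ (|C| + |x l| + 1) l| ≤ ‖γ (|C| + |x l| + 1)‖ := by
        simpa [Real.norm_eq_abs] using norm_le_pi_norm (γ (|C| + |x l| + 1)) l
      rw [hγl] at h3
      have h4 : |C| + 1 ≤ |x l + (|C| + |x l| + 1)| := by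
        have h5 : (0:ℝ) ≤ |C| := abs_nonneg C
        have h6 := neg_abs_le (x l)
        have h7 : 0 ≤ x l + (|C| + |x l| + 1) := by linarith
        rw [abs_of_nonneg h7]; linarith
      have hC : C ≤ |C| := le_abs_self C
      linarith
end

section
/- Let A = (A₁,…,Aₙ) with 0 ≤ A_j < 1/2 for all j, and let E(A) = {z ∈ ℂⁿ : 1 − |z|² − ∑ A_j(z_j² + z̄_j²) > 0}. Let Φ(z) = Mz + ξ with M ∈ GL(n, ℂ), ξ ∈ ℂⁿ, and suppose Ω = Φ(E(A)) satisfies d_H(Ω, 𝔹ⁿ) < ε for some ε ∈ (0, 1/2). Then A_n ≤ ε/(1 + ε²). -/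
open Metric Set

/-- The real ellipsoid `E(A)` as a subset of `ℂⁿ` (with the Euclidean metric). -/
noncomputable def realEllipsoidE (n : ℕ) (A : Fin n → ℝ) :
    Set (EuclideanSpace ℂ (Fin n)) :=
  {z | 0 < 1 - (∑ j, ‖z j‖ ^ 2) -
    ∑ j, A j * ((z j) ^ 2 + ((starRingEnd ℂ) (z j)) ^ 2).re}

noncomputable def qf {m : ℕ} (A : Fin m → ℝ) (z : EuclideanSpace ℂ (Fin m)) : ℝ :=
  ∑ j, ((1 + 2 * A j) * (z j).re ^ 2 + (1 - 2 * A j) * (z j).im ^ 2)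

lemma qf_term (t : ℝ) (w : ℂ) :
    ‖w‖ ^ 2 + t * (w ^ 2 + ((starRingEnd ℂ) w) ^ 2).re
      = (1 + 2 * t) * w.re ^ 2 + (1 - 2 * t) * w.im ^ 2 := by
  rw [Complex.sq_norm]
  simp only [Complex.normSq_apply, pow_two, Complex.mul_re, Complex.add_re,
    Complex.conj_re, Complex.conj_im]
  ring

lemma realEllipsoidE_eq (m : ℕ) (A : Fin m → ℝ) :
    realEllipsoidE m A = {z | qf A z < 1} := by
  ext z
  simp only [realEllipsoidE, qf, Set.mem_setOf_eq]
  have hsum : (∑ j, ‖z j‖ ^ 2)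
      + ∑ j, A j * ((z j) ^ 2 + ((starRingEnd ℂ) (z j)) ^ 2).re
      = ∑ j, ((1 + 2 * A j) * (z j).re ^ 2 + (1 - 2 * A j) * (z j).im ^ 2) := by
    rw [← Finset.sum_add_distrib]
    exact Finset.sum_congr rfl fun j _ => qf_term (A j) (z j)
  constructor <;> intro h <;> linarith

lemma qf_continuous {m : ℕ} (A : Fin m → ℝ) : Continuous (qf A) := by
  apply continuous_finset_sum
  intro j _
  have hj : Continuous fun z : EuclideanSpace ℂ (Fin m) => z j :=
    (EuclideanSpace.proj j).continuous
  fun_prop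

lemma qf_single {m : ℕ} (A : Fin m → ℝ) (i : Fin m) (w : ℂ) :
    qf A (EuclideanSpace.single i w) = (1 + 2 * A i) * w.re ^ 2 + (1 - 2 * A i) * w.im ^ 2 := by
  unfold qf
  rw [Finset.sum_eq_single i]
  · simp [EuclideanSpace.single_apply]
  · intro b _ hb
    simp [EuclideanSpace.single_apply, hb]
  · simp

lemma smul_single {m : ℕ} (i : Fin m) (w : ℂ) :
    w • EuclideanSpace.single i (1 : ℂ) = EuclideanSpace.single i w := by
  apply (WithLp.equiv 2 _).injective
  funext j
  by_cases h : j = i <;>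
    simp [WithLp.equiv_apply, PiLp.smul_apply, EuclideanSpace.single_apply, h]

lemma qf_convex {m : ℕ} (A : Fin m → ℝ) (hA : ∀ j, 0 ≤ A j ∧ A j < 1 / 2) :
    Convex ℝ {z : EuclideanSpace ℂ (Fin m) | qf A z < 1} := by
  intro z hz w hw s t hs ht hst
  simp only [Set.mem_setOf_eq] at hz hw ⊢
  have key : qf A (s • z + t • w) ≤ s * qf A z + t * qf A w := by
    unfold qf
    rw [Finset.mul_sum, Finset.mul_sum, ← Finset.sum_add_distrib]
    apply Finset.sum_le_sum
    intro j _
    have h1 : (0:ℝ) ≤ 1 + 2 * A j := by have := (hA j).1; linarith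
    have h2 : (0:ℝ) ≤ 1 - 2 * A j := by have := (hA j).2; linarith
    have e1 : ((s • z + t • w) j).re = s * (z j).re + t * (w j).re := by
      simp [PiLp.add_apply, PiLp.smul_apply, Complex.smul_re]
    have e2 : ((s • z + t • w) j).im = s * (z j).im + t * (w j).im := by
      simp [PiLp.add_apply, PiLp.smul_apply, Complex.smul_im]
    have ht2 : (0:ℝ) ≤ 1 - s := by linarith
    rw [e1, e2, show t = 1 - s by linarith]
    nlinarith [mul_nonneg h1 (mul_nonneg (mul_nonneg hs ht2) (sq_nonneg ((z j).re - (w j).re))),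
      mul_nonneg h2 (mul_nonneg (mul_nonneg hs ht2) (sq_nonneg ((z j).im - (w j).im)))]
  have hlt : s * qf A z + t * qf A w < 1 := by
    rcases eq_or_lt_of_le hs with h | h
    · have hs0 : s = 0 := h.symm
      have ht1 : t = 1 := by linarith
      rw [hs0, ht1]; linarith
    · nlinarith
  linarith

lemma qf_symm {m : ℕ} (A : Fin m → ℝ) :
    (fun z : EuclideanSpace ℂ (Fin m) => -z) '' {z | qf A z < 1} = {z | qf A z < 1} := by
  have h : ∀ z : EuclideanSpace ℂ (Fin m), qf A (-z) = qf A z := by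
    intro z
    unfold qf
    apply Finset.sum_congr rfl
    intro j _
    simp [PiLp.neg_apply]
  ext z
  constructor
  · rintro ⟨w, hw, rfl⟩
    simpa [h w] using hw
  · intro hz
    exact ⟨-z, by simpa [h z] using hz, by simp⟩

lemma qf_bounded {m : ℕ} [NeZero m] (A : Fin m → ℝ) (hA : ∀ j, 0 ≤ A j ∧ A j < 1 / 2) :
    Bornology.IsBounded {z : EuclideanSpace ℂ (Fin m) | qf A z < 1} := by
  have hne : (Finset.univ : Finset (Fin m)).Nonempty := Finset.univ_nonempty
  set μ := Finset.univ.inf' hne (fun j => 1 - 2 * A j) with hμ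
  have hμpos : 0 < μ := by
    rw [hμ, Finset.lt_inf'_iff]
    intro j _
    have := (hA j).2; linarith
  apply (Metric.isBounded_closedBall (x := (0 : EuclideanSpace ℂ (Fin m)))
    (r := Real.sqrt (1/μ))).subset
  intro z hz
  simp only [Set.mem_setOf_eq] at hz
  have hbound : μ * ‖z‖ ^ 2 ≤ qf A z := by
    have hnorm : ‖z‖ ^ 2 = ∑ j, ‖z j‖ ^ 2 := by
      rw [EuclideanSpace.norm_eq]
      rw [Real.sq_sqrt (by positivity)]
    rw [hnorm, Finset.mul_sum]
    unfold qf
    apply Finset.sum_le_sum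
    intro j _
    have hj : μ ≤ 1 - 2 * A j := Finset.inf'_le _ (Finset.mem_univ j)
    have hj0 : 0 ≤ A j := (hA j).1
    have habs : ‖z j‖ ^ 2 = (z j).re ^ 2 + (z j).im ^ 2 := by
      rw [Complex.sq_norm, Complex.normSq_apply]; ring
    rw [habs]
    nlinarith [sq_nonneg (z j).re, sq_nonneg (z j).im]
  have hz2 : ‖z‖ ^ 2 ≤ 1 / μ := by
    rw [le_div_iff₀ hμpos]
    nlinarith
  rw [Metric.mem_closedBall, dist_zero_right]
  calc ‖z‖ = Real.sqrt (‖z‖ ^ 2) := by rw [Real.sqrt_sq (norm_nonneg z)]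
    _ ≤ Real.sqrt (1/μ) := Real.sqrt_le_sqrt hz2

/-- If a convex set is ε-dense in the unit ball, its closure contains the ball of radius 1-ε. -/
lemma ball_subset_closure_of_dense {E : Type*} [NormedAddCommGroup E] [NormedSpace ℝ E]
    {s : Set E} (hconv : Convex ℝ s) {ε : ℝ} (hε0 : 0 < ε)
    (h : ∀ y ∈ Metric.ball (0 : E) 1, ∃ x ∈ s, dist y x < ε) :
    Metric.ball (0 : E) (1 - ε) ⊆ closure s := by
  intro x hx
  by_contra hxc
  obtain ⟨f, u, hfs, hfx⟩ := geometric_hahn_banach_closed_point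
    hconv.closure isClosed_closure hxc
  obtain ⟨b, hbs, -⟩ := h 0 (by simp)
  have hfb : f b < u := hfs b (subset_closure hbs)
  have hxnorm : ‖x‖ < 1 - ε := by simpa using hx
  have hfx_le : f x ≤ ‖f‖ * ‖x‖ := by
    calc f x ≤ |f x| := le_abs_self _
      _ = ‖f x‖ := (Real.norm_eq_abs _).symm
      _ ≤ ‖f‖ * ‖x‖ := f.le_opNorm x
  have hfpos : 0 < ‖f‖ := by
    rcases (norm_nonneg f).eq_or_lt.imp Eq.symm id with h0 | h0
    · exfalso
      have hf0 : f = 0 := norm_le_zero_iff.mp h0.le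
      rw [hf0] at hfx hfb
      simp at hfx hfb
      linarith
    · exact h0
  have hu : u + ε * ‖f‖ < ‖f‖ := by
    have : u < ‖f‖ * (1 - ε) := lt_of_lt_of_le hfx
      (hfx_le.trans (by nlinarith [norm_nonneg x]))
    nlinarith
  obtain ⟨p, hp1, hp2⟩ := f.exists_lt_apply_of_lt_opNorm hu
  rw [Real.norm_eq_abs] at hp2
  rcases abs_cases (f p) with ⟨he, -⟩ | ⟨he, -⟩
  · obtain ⟨w, hws, hwd⟩ := h p (by simpa using hp1)
    have hfw : f w < u := hfs w (subset_closure hws)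
    have : f p - f w ≤ ‖f‖ * dist p w := by
      calc f p - f w = f (p - w) := by rw [map_sub]
        _ ≤ |f (p - w)| := le_abs_self _
        _ = ‖f (p - w)‖ := (Real.norm_eq_abs _).symm
        _ ≤ ‖f‖ * ‖p - w‖ := f.le_opNorm _
        _ = ‖f‖ * dist p w := by rw [dist_eq_norm]
    have hd : ‖f‖ * dist p w < ‖f‖ * ε := by
      exact mul_lt_mul_of_pos_left hwd hfpos
    rw [he] at hp2
    linarith
  · obtain ⟨w, hws, hwd⟩ := h (-p) (by simpa using hp1)
    have hfw : f w < u := hfs w (subset_closure hws)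
    have : f (-p) - f w ≤ ‖f‖ * dist (-p) w := by
      calc f (-p) - f w = f (-p - w) := by rw [map_sub]
        _ ≤ |f (-p - w)| := le_abs_self _
        _ = ‖f (-p - w)‖ := (Real.norm_eq_abs _).symm
        _ ≤ ‖f‖ * ‖-p - w‖ := f.le_opNorm _
        _ = ‖f‖ * dist (-p) w := by rw [dist_eq_norm]
    have hd : ‖f‖ * dist (-p) w < ‖f‖ * ε := mul_lt_mul_of_pos_left hwd hfpos
    have hneg : f (-p) = -(f p) := map_neg f p
    rw [he] at hp2
    rw [hneg] at this
    linarith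

set_option maxHeartbeats 2000000 in
/-- Proposition 4.3: if `Ω = Φ(E(A))` for a complex affine transformation
`Φ(z) = Mz + ξ` and `d_H(Ω, 𝔹ⁿ) < ε` with `ε ∈ (0, 1/2)`, then `Aₙ ≤ ε/(1+ε²)`. -/
theorem stmt_13 (n : ℕ) (A : Fin (n + 1) → ℝ)
    (hA : ∀ j, 0 ≤ A j ∧ A j < 1 / 2)
    (M : EuclideanSpace ℂ (Fin (n + 1)) ≃ₗ[ℂ] EuclideanSpace ℂ (Fin (n + 1)))
    (ξ : EuclideanSpace ℂ (Fin (n + 1)))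
    (Ω : Set (EuclideanSpace ℂ (Fin (n + 1))))
    (hΩ : Ω = (fun z => M z + ξ) '' realEllipsoidE (n + 1) A)
    (ε : ℝ) (hε0 : 0 < ε) (hε : ε < 1 / 2)
    (hH : Metric.hausdorffDist Ω
      (Metric.ball (0 : EuclideanSpace ℂ (Fin (n + 1))) 1) < ε) :
    A (Fin.last n) ≤ ε / (1 + ε ^ 2) := by
  obtain ⟨ha0, ha2⟩ := hA (Fin.last n)
  set a := A (Fin.last n) with ha_def
  have hEeq := realEllipsoidE_eq (n + 1) A
  set Eset := realEllipsoidE (n + 1) A with hEdef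
  -- the distinguished direction
  set e : EuclideanSpace ℂ (Fin (n + 1)) := EuclideanSpace.single (Fin.last n) (1 : ℂ) with he_def
  have he1 : ‖e‖ = 1 := by rw [he_def, EuclideanSpace.norm_single]; simp
  have hMene : M e ≠ 0 := by
    intro h
    have h0 : e = 0 := M.map_eq_zero_iff.mp h
    rw [h0] at he1; simp at he1
  set c : ℝ := ‖M e‖ with hc_def
  have hc : 0 < c := by rw [hc_def]; exact norm_pos_iff.mpr hMene
  -- membership criterion for multiples of e
  have hmem : ∀ w : ℂ, w • e ∈ Eset ↔
      (1 + 2 * a) * w.re ^ 2 + (1 - 2 * a) * w.im ^ 2 < 1 := by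
    intro w
    rw [he_def, smul_single, hEeq]
    simp [qf_single, ← ha_def]
  -- nonemptiness and boundedness
  have h0mem : (0 : EuclideanSpace ℂ (Fin (n + 1))) ∈ Eset := by
    rw [hEeq]
    simp [qf, PiLp.zero_apply]
  have hΩne : Ω.Nonempty := ⟨M 0 + ξ, by rw [hΩ]; exact ⟨0, h0mem, rfl⟩⟩
  have hballne : (Metric.ball (0 : EuclideanSpace ℂ (Fin (n + 1))) 1).Nonempty :=
    Metric.nonempty_ball.mpr one_pos
  have hEbdd : Bornology.IsBounded Eset := by rw [hEeq]; exact qf_bounded A hA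
  set T := M.toContinuousLinearEquiv with hT_def
  have hTz : ∀ z, T z = M z := fun z => congrFun (M.coe_toContinuousLinearEquiv') z
  have hΩbdd : Bornology.IsBounded Ω := by
    obtain ⟨R, hR⟩ := hEbdd.subset_closedBall 0
    apply (Metric.isBounded_closedBall
      (x := (0 : EuclideanSpace ℂ (Fin (n + 1))))
      (r := ‖(T : EuclideanSpace ℂ (Fin (n + 1)) →L[ℂ] EuclideanSpace ℂ (Fin (n + 1)))‖ * R + ‖ξ‖)).subset
    rw [hΩ]
    rintro x ⟨z, hz, rfl⟩
    have hz' : ‖z‖ ≤ R := by simpa [Metric.mem_closedBall, dist_zero_right] using hR hz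
    have h1 : ‖M z‖ ≤ ‖(T : EuclideanSpace ℂ (Fin (n + 1)) →L[ℂ] EuclideanSpace ℂ (Fin (n + 1)))‖ * ‖z‖ := by
      rw [← hTz]
      exact (T : EuclideanSpace ℂ (Fin (n + 1)) →L[ℂ] EuclideanSpace ℂ (Fin (n + 1))).le_opNorm z
    have h2 : ‖M z + ξ‖ ≤ ‖M z‖ + ‖ξ‖ := norm_add_le _ _
    rw [Metric.mem_closedBall, dist_zero_right]
    have h3 : ‖(T : EuclideanSpace ℂ (Fin (n + 1)) →L[ℂ] EuclideanSpace ℂ (Fin (n + 1)))‖ * ‖z‖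
        ≤ ‖(T : EuclideanSpace ℂ (Fin (n + 1)) →L[ℂ] EuclideanSpace ℂ (Fin (n + 1)))‖ * R :=
      mul_le_mul_of_nonneg_left hz' (norm_nonneg _)
    linarith
  have hne : EMetric.hausdorffEdist Ω (Metric.ball (0 : EuclideanSpace ℂ (Fin (n + 1))) 1) ≠ ⊤ :=
    Metric.hausdorffEdist_ne_top_of_nonempty_of_bounded hΩne hballne hΩbdd Metric.isBounded_ball
  -- Ω is inside the ball of radius 1 + ε
  have hΩsub : Ω ⊆ Metric.ball (0 : EuclideanSpace ℂ (Fin (n + 1))) (1 + ε) := by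
    intro x hx
    obtain ⟨y, hy, hxy⟩ := Metric.exists_dist_lt_of_hausdorffDist_lt hx hH hne
    rw [mem_ball_zero_iff] at hy ⊢
    have h3 := dist_triangle x y 0
    simp only [dist_zero_right] at h3
    linarith
  -- square roots
  have h2a1 : (0:ℝ) < 1 - 2 * a := by linarith
  have h2a2 : (0:ℝ) < 1 + 2 * a := by linarith
  set β : ℝ := Real.sqrt (1 - 2 * a) with hβ_def
  set α : ℝ := Real.sqrt (1 + 2 * a) with hα_def
  have hβ0 : 0 < β := Real.sqrt_pos.mpr h2a1
  have hα0 : 0 < α := Real.sqrt_pos.mpr h2a2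
  have hβ2 : β ^ 2 = 1 - 2 * a := Real.sq_sqrt h2a1.le
  have hα2 : α ^ 2 = 1 + 2 * a := Real.sq_sqrt h2a2.le
  -- upper bound : c ≤ (1+ε) β
  have hub : c ≤ (1 + ε) * β := by
    by_contra hcon
    push_neg at hcon
    have h4 : (1 + ε) / c < 1 / β := by
      rw [div_lt_div_iff₀ hc hβ0]; nlinarith
    set s : ℝ := ((1 + ε) / c + 1 / β) / 2 with hs_def
    have hs_pos : 0 < s := by positivity
    have hs_lt : s < 1 / β := by rw [hs_def]; linarith
    have hs_gt : (1 + ε) / c < s := by rw [hs_def]; linarith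
    have hsc : 1 + ε < s * c := by
      rw [div_lt_iff₀ hc] at hs_gt; linarith
    have hsβ : (1 - 2 * a) * s ^ 2 < 1 := by
      rw [lt_div_iff₀ hβ0] at hs_lt
      nlinarith [hs_lt, mul_pos hs_pos hβ0, hβ2]
    set w₁ : ℂ := (s : ℂ) * Complex.I with hw_def
    have hwre : w₁.re = 0 := by simp [hw_def]
    have hwim : w₁.im = s := by simp [hw_def]
    have hmem1 : w₁ • e ∈ Eset := by
      rw [hmem]
      rw [hwre, hwim]
      nlinarith
    have hmem2 : (-w₁) • e ∈ Eset := by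
      rw [hmem]
      simp only [Complex.neg_re, Complex.neg_im, hwre, hwim]
      nlinarith
    have hp1 : M (w₁ • e) + ξ ∈ Ω := by rw [hΩ]; exact ⟨_, hmem1, rfl⟩
    have hp2 : M ((-w₁) • e) + ξ ∈ Ω := by rw [hΩ]; exact ⟨_, hmem2, rfl⟩
    have hb1 := hΩsub hp1
    have hb2 := hΩsub hp2
    rw [mem_ball_zero_iff] at hb1 hb2
    have hdiff : (M (w₁ • e) + ξ) - (M ((-w₁) • e) + ξ) = (2 * w₁) • M e := by
      rw [map_smul, map_smul]
      rw [show (2 : ℂ) * w₁ = w₁ - (-w₁) by ring, sub_smul]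
      abel
    have hnd : ‖(M (w₁ • e) + ξ) - (M ((-w₁) • e) + ξ)‖ = 2 * s * c := by
      rw [hdiff, norm_smul, hc_def]
      have : ‖(2 : ℂ) * w₁‖ = 2 * s := by
        rw [hw_def, norm_mul, norm_mul]
        simp [Complex.norm_real, abs_of_pos hs_pos]
      rw [this]
    have htri : ‖(M (w₁ • e) + ξ) - (M ((-w₁) • e) + ξ)‖ ≤
        ‖M (w₁ • e) + ξ‖ + ‖M ((-w₁) • e) + ξ‖ := norm_sub_le _ _
    rw [hnd] at htri
    nlinarith
  -- convexity
  have hconvE : Convex ℝ Eset := by rw [hEeq]; exact qf_convex A hA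
  have hconvΩ : Convex ℝ Ω := by
    rw [hΩ]
    have h1 : Convex ℝ ((M.toLinearMap.restrictScalars ℝ) '' Eset) := hconvE.linear_image _
    have h2 := h1.translate ξ
    have h3 : (fun z => M z + ξ) '' Eset
        = (fun z => ξ + z) '' ((M.toLinearMap.restrictScalars ℝ) '' Eset) := by
      rw [Set.image_image]
      apply Set.image_congr
      intro z _
      simp [add_comm]
    rw [h3]
    exact h2
  -- density of Ω in the unit ball
  have hdense : ∀ y ∈ Metric.ball (0 : EuclideanSpace ℂ (Fin (n + 1))) 1,
      ∃ x ∈ Ω, dist y x < ε := by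
    intro y hy
    obtain ⟨x, hxΩ, hd⟩ := Metric.exists_dist_lt_of_hausdorffDist_lt' hy hH hne
    exact ⟨x, hxΩ, by rwa [dist_comm]⟩
  have hclosure : Metric.ball (0 : EuclideanSpace ℂ (Fin (n + 1))) (1 - ε) ⊆ closure Ω :=
    ball_subset_closure_of_dense hconvΩ hε0 hdense
  -- closure of Ω as image of closure of Eset
  set φ : EuclideanSpace ℂ (Fin (n + 1)) ≃ₜ EuclideanSpace ℂ (Fin (n + 1)) :=
    T.toHomeomorph.trans (Homeomorph.addRight ξ) with hφ_def
  have hφ : ∀ z, φ z = M z + ξ := by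
    intro z
    rw [hφ_def]
    simp only [Homeomorph.trans_apply, ContinuousLinearEquiv.coe_toHomeomorph,
      Homeomorph.coe_addRight]
    rw [hTz]
  have hclosureΩ : closure Ω = (fun z => M z + ξ) '' closure Eset := by
    rw [hΩ]
    have himg1 : (fun z => M z + ξ) '' Eset = φ '' Eset :=
      Set.image_congr fun z _ => (hφ z).symm
    have himg2 : (fun z => M z + ξ) '' closure Eset = φ '' closure Eset :=
      Set.image_congr fun z _ => (hφ z).symm
    rw [himg1, himg2, ← Homeomorph.image_closure]
  -- real scalars commute with M
  have hsm : ∀ (t : ℝ) (v : EuclideanSpace ℂ (Fin (n + 1))), M (t • v) = t • M v := by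
    intro t v
    have : t • v = ((t : ℂ)) • v := by rw [← algebraMap_smul ℂ t v]; norm_num
    rw [this, map_smul]
    rw [← algebraMap_smul ℂ t (M v)]; norm_num
  -- key lower estimate
  have hkey : ∀ r : ℝ, 0 ≤ r → r < 1 - ε → (1 + 2 * a) * r ^ 2 ≤ c ^ 2 := by
    intro r hr0 hr1
    set p : EuclideanSpace ℂ (Fin (n + 1)) := ((r / c : ℝ) : ℂ) • M e with hp_def
    have hpn : ‖p‖ = r := by
      rw [hp_def, norm_smul, ← hc_def]
      simp only [Complex.norm_real, Real.norm_eq_abs]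
      rw [abs_of_nonneg (by positivity)]
      field_simp
    have hp1 : p ∈ closure Ω := hclosure (by rw [mem_ball_zero_iff, hpn]; linarith)
    have hp2 : -p ∈ closure Ω := hclosure (by rw [mem_ball_zero_iff, norm_neg, hpn]; linarith)
    rw [hclosureΩ] at hp1 hp2
    obtain ⟨z₁, hz₁, hz₁e⟩ := hp1
    obtain ⟨z₂, hz₂, hz₂e⟩ := hp2
    have hnz₂ : -z₂ ∈ closure Eset := by
      have h1 : -z₂ ∈ (fun z : EuclideanSpace ℂ (Fin (n + 1)) => -z) '' closure Eset :=
        ⟨z₂, hz₂, rfl⟩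
      have h2 := image_closure_subset_closure_image
        (f := fun z : EuclideanSpace ℂ (Fin (n + 1)) => -z) (s := Eset) continuous_neg
      have h3 : (fun z : EuclideanSpace ℂ (Fin (n + 1)) => -z) '' Eset = Eset := by
        rw [hEeq]; exact qf_symm A
      rw [h3] at h2
      exact h2 h1
    have hmid : ((1:ℝ)/2) • z₁ + ((1:ℝ)/2) • (-z₂) ∈ closure Eset :=
      hconvE.closure hz₁ hnz₂ (by norm_num) (by norm_num) (by norm_num)
    have hM1 : M z₁ = p - ξ := eq_sub_of_add_eq hz₁e
    have hM2 : M z₂ = -p - ξ := eq_sub_of_add_eq hz₂e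
    have hMmid : M (((1:ℝ)/2) • z₁ + ((1:ℝ)/2) • (-z₂)) = p := by
      rw [map_add, hsm, hsm, map_neg, hM1, hM2]
      module
    have hz₀ : ((1:ℝ)/2) • z₁ + ((1:ℝ)/2) • (-z₂) = ((r / c : ℝ) : ℂ) • e := by
      apply M.injective
      rw [hMmid, map_smul, ← hp_def]
    have hcl : ((r / c : ℝ) : ℂ) • e ∈ closure Eset := hz₀ ▸ hmid
    have hsub : closure Eset ⊆ {z | qf A z ≤ 1} :=
      closure_minimal (by rw [hEeq]; exact fun z hz => show qf A z ≤ 1 from le_of_lt hz)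
        (isClosed_le (qf_continuous A) continuous_const)
    have hval := hsub hcl
    rw [he_def, smul_single] at hval
    simp only [Set.mem_setOf_eq, qf_single, Complex.ofReal_re, Complex.ofReal_im] at hval
    have hval' : (1 + 2 * a) * (r / c) ^ 2 ≤ 1 := by
      rw [← ha_def] at hval
      nlinarith [hval]
    have hrc : (r / c) ^ 2 = r ^ 2 / c ^ 2 := by rw [div_pow]
    rw [hrc, ← mul_div_assoc, div_le_one (by positivity)] at hval'
    exact hval'
  -- lower bound : (1+2a)(1-ε)² ≤ c²
  have h5 : (1 + 2 * a) * (1 - ε) ^ 2 ≤ c ^ 2 := by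
    by_contra hcon
    push_neg at hcon
    have hca : c < (1 - ε) * α := by
      have hx1 : c = Real.sqrt (c ^ 2) := (Real.sqrt_sq hc.le).symm
      have hx2 : Real.sqrt (c ^ 2) < Real.sqrt ((1 + 2 * a) * (1 - ε) ^ 2) :=
        Real.sqrt_lt_sqrt (by positivity) hcon
      have hx3 : Real.sqrt ((1 + 2 * a) * (1 - ε) ^ 2) = α * (1 - ε) := by
        rw [Real.sqrt_mul h2a2.le, Real.sqrt_sq (by linarith)]
      rw [hx3] at hx2
      rw [← hx1] at hx2
      linarith [hx2, mul_comm α (1 - ε)]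
    have hca' : c / α < 1 - ε := by rw [div_lt_iff₀ hα0]; nlinarith
    set r : ℝ := (c / α + (1 - ε)) / 2 with hr_def
    have hr0 : 0 ≤ r := by
      rw [hr_def]
      have hx1 : 0 ≤ c / α := by positivity
      linarith
    have hrlt : r < 1 - ε := by rw [hr_def]; linarith
    have hkr := hkey r hr0 hrlt
    have hrg : c / α < r := by rw [hr_def]; linarith
    have hrg' : c < r * α := by rw [div_lt_iff₀ hα0] at hrg; linarith
    nlinarith [hrg', hc, hα0, hr0]
  have h6 : c ^ 2 ≤ (1 + ε) ^ 2 * (1 - 2 * a) := by nlinarith [hub, hβ2, hβ0, hc]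
  rw [le_div_iff₀ (by positivity : (0:ℝ) < 1 + ε ^ 2)]
  nlinarith [h5, h6]
end

section
/- Suppose f is a positive algebraic function on an open connected set Ω ⊆ ℝᵐ with minimal polynomial P(t, Y) = ∑_{j=0}^N a_j(t) Y^j (a_N ≢ 0, N ≥ 1), and suppose 1/f extends continuously to a boundary portion S ⊂ ∂Ω with 1/f → 0 at S, with the extension h of 1/f to a neighborhood V of S satisfying |h| ≤ C·d(t)^{k} for a continuous function d vanishing on S and some k ≥ 1. Then |a_N(t)| ≤ C'·d(t)^{k} on Ω ∩ V for some constant C'. -/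
/-- if `f > 0` on `Ω` has minimal polynomial `P = ∑_{j=0}^N a_j(t) Y^j`
(`N ≥ 1`, `a_N ≢ 0`), and `1/f` extends continuously to a bounded neighborhood `V` of a
boundary portion `S ⊆ ∂Ω` with `|1/f| ≤ C·d^k` for a continuous `d ≥ 0` vanishing on `S`,
then `|a_N| ≤ C'·d^k` on `Ω ∩ V`. -/
theorem stmt_18 (m : ℕ) (Ω : Set (Fin m → ℝ)) (f : (Fin m → ℝ) → ℝ)
    (hfpos : ∀ x ∈ Ω, 0 < f x)
    (P : Polynomial (MvPolynomial (Fin m) ℝ)) (hN : 1 ≤ P.natDegree)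
    (haN : P.leadingCoeff ≠ 0)
    (hann : ∀ x ∈ Ω, Polynomial.eval₂ (MvPolynomial.eval x) (f x) P = 0)
    (hmin : ∀ Q : Polynomial (MvPolynomial (Fin m) ℝ),
      (∀ x ∈ Ω, Polynomial.eval₂ (MvPolynomial.eval x) (f x) Q = 0) → P ∣ Q)
    (S : Set (Fin m → ℝ)) (hS : S ⊆ frontier Ω)
    (V : Set (Fin m → ℝ)) (hVopen : IsOpen V) (hSV : S ⊆ V)
    (hVbd : Bornology.IsBounded V)
    (h : (Fin m → ℝ) → ℝ) (hhcont : ContinuousOn h V)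
    (hhext : ∀ x ∈ Ω ∩ V, h x = 1 / f x)
    (d : (Fin m → ℝ) → ℝ) (hdcont : ContinuousOn d V)
    (hd0 : ∀ x ∈ V, 0 ≤ d x) (hdS : ∀ x ∈ S, d x = 0)
    (k : ℕ) (hk : 1 ≤ k) (C : ℝ)
    (hbound : ∀ x ∈ V, |h x| ≤ C * d x ^ k) :
    ∃ C' : ℝ, ∀ x ∈ Ω ∩ V, |MvPolynomial.eval x P.leadingCoeff| ≤ C' * d x ^ k := by
  set N := P.natDegree with hNdef
  -- bound on coefficients on closure of V
  obtain ⟨M0, hM0⟩ : ∃ M : ℝ, ∀ x ∈ closure V, ∀ i ∈ Finset.range (N + 1),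
      |MvPolynomial.eval x (P.coeff i)| ≤ M := by
    obtain ⟨M, hM⟩ := hVbd.isCompact_closure.exists_bound_of_continuousOn
      (f := fun x => ∑ i ∈ Finset.range (N + 1), |MvPolynomial.eval x (P.coeff i)|)
      (Continuous.continuousOn (by
        apply continuous_finset_sum
        intro i _
        exact (MvPolynomial.continuous_eval _).abs))
    refine ⟨M, fun x hx i hi => ?_⟩
    refine le_trans ?_ (le_trans (le_abs_self _) (hM x hx))
    exact Finset.single_le_sum (f := fun i => |MvPolynomial.eval x (P.coeff i)|)
      (fun j _ => abs_nonneg _) hi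
  set M : ℝ := max M0 1 with hMdef
  have hM1 : (1 : ℝ) ≤ M := le_max_right _ _
  have hMpos : (0 : ℝ) < M := lt_of_lt_of_le one_pos hM1
  have hM : ∀ x ∈ V, ∀ i ∈ Finset.range (N + 1), |MvPolynomial.eval x (P.coeff i)| ≤ M :=
    fun x hx i hi => le_trans (hM0 x (subset_closure hx) i hi) (le_max_left _ _)
  set B : ℝ := max |C| 1 with hBdef
  have hB1 : (1 : ℝ) ≤ B := le_max_right _ _
  have hBpos : (0 : ℝ) < B := lt_of_lt_of_le one_pos hB1
  refine ⟨(N + 1) * M * B ^ N, fun x hx => ?_⟩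
  obtain ⟨hxΩ, hxV⟩ := hx
  have hfx : 0 < f x := hfpos x hxΩ
  have hhx : h x = 1 / f x := hhext x ⟨hxΩ, hxV⟩
  have hdx : 0 ≤ d x := hd0 x hxV
  have hdk : 0 ≤ d x ^ k := pow_nonneg hdx k
  have habs : |h x| ≤ B * d x ^ k := by
    calc |h x| ≤ C * d x ^ k := hbound x hxV
    _ ≤ |C| * d x ^ k := by
        apply mul_le_mul_of_nonneg_right (le_abs_self C) hdk
    _ ≤ B * d x ^ k := by
        apply mul_le_mul_of_nonneg_right (le_max_left _ _) hdk
  have hlc : P.leadingCoeff = P.coeff N := rfl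
  have hCpos : (0 : ℝ) < (N + 1) * M * B ^ N := by positivity
  rcases le_or_gt (d x ^ k) 1 with hcase | hcase
  · -- small-d case: use the algebraic identity
    have hFH : f x * h x = 1 := by rw [hhx]; field_simp
    have hsum : ∑ i ∈ Finset.range (N + 1),
        MvPolynomial.eval x (P.coeff i) * f x ^ i = 0 := by
      have := hann x hxΩ
      rwa [Polynomial.eval₂_eq_sum_range] at this
    have hkey : MvPolynomial.eval x (P.coeff N) =
        -∑ i ∈ Finset.range N, MvPolynomial.eval x (P.coeff i) * h x ^ (N - i) := by
      have h1 : MvPolynomial.eval x (P.coeff N) * f x ^ N =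
          -∑ i ∈ Finset.range N, MvPolynomial.eval x (P.coeff i) * f x ^ i := by
        rw [Finset.sum_range_succ] at hsum
        linarith [hsum]
      have h2 : MvPolynomial.eval x (P.coeff N)
          = MvPolynomial.eval x (P.coeff N) * f x ^ N * h x ^ N := by
        rw [mul_assoc, ← mul_pow, hFH, one_pow, mul_one]
      rw [h2, h1, neg_mul, Finset.sum_mul]
      congr 1
      apply Finset.sum_congr rfl
      intro i hi
      have hiN : i ≤ N := le_of_lt (Finset.mem_range.mp hi)
      have hsplit : h x ^ N = h x ^ i * h x ^ (N - i) := by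
        rw [← pow_add]
        congr 1
        omega
      have hpow : f x ^ i * h x ^ N = h x ^ (N - i) := by
        rw [hsplit, ← mul_assoc, ← mul_pow, hFH, one_pow, one_mul]
      rw [mul_assoc, hpow]
    rw [hlc, hkey, abs_neg]
    calc |∑ i ∈ Finset.range N, MvPolynomial.eval x (P.coeff i) * h x ^ (N - i)|
        ≤ ∑ i ∈ Finset.range N, |MvPolynomial.eval x (P.coeff i) * h x ^ (N - i)| :=
          Finset.abs_sum_le_sum_abs _ _
      _ ≤ ∑ i ∈ Finset.range N, M * (B ^ N * d x ^ k) := by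
          apply Finset.sum_le_sum
          intro i hi
          rw [abs_mul, abs_pow]
          have hiN : i < N := Finset.mem_range.mp hi
          have hb : |h x| ≤ B := le_trans habs (by nlinarith)
          have h1 : |h x| ^ (N - i) ≤ B ^ (N - i - 1) * (B * d x ^ k) := by
            have hpos : 1 ≤ N - i := by omega
            have : |h x| ^ (N - i) = |h x| ^ (N - i - 1) * |h x| := by
              rw [← pow_succ]
              congr 1
              omega
            rw [this]
            apply mul_le_mul (pow_le_pow_left₀ (abs_nonneg _) hb _) habs (abs_nonneg _)
              (pow_nonneg (le_of_lt hBpos) _)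
          calc |MvPolynomial.eval x (P.coeff i)| * |h x| ^ (N - i)
              ≤ M * (B ^ (N - i - 1) * (B * d x ^ k)) := by
                apply mul_le_mul (hM x hxV i (by simp; omega)) h1
                  (pow_nonneg (abs_nonneg _) _) (le_of_lt hMpos)
            _ = M * (B ^ (N - i) * d x ^ k) := by
                have hBB : B ^ (N - i - 1) * B = B ^ (N - i) := by
                  rw [← pow_succ]
                  congr 1
                  omega
                rw [← hBB]
                ring
            _ ≤ M * (B ^ N * d x ^ k) := by
                apply mul_le_mul_of_nonneg_left _ (le_of_lt hMpos)
                apply mul_le_mul_of_nonneg_right _ hdk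
                exact pow_le_pow_right₀ hB1 (by omega)
      _ = N * (M * (B ^ N * d x ^ k)) := by
          rw [Finset.sum_const, Finset.card_range, nsmul_eq_mul]
      _ ≤ (N + 1) * M * B ^ N * d x ^ k := by
          have : (N : ℝ) ≤ (N : ℝ) + 1 := by linarith
          nlinarith [pow_nonneg (le_of_lt hBpos) N]
  · -- large-d case: trivial bound by M
    rw [hlc]
    calc |MvPolynomial.eval x (P.coeff N)| ≤ M := hM x hxV N (by simp)
      _ = M * 1 := by ring
      _ ≤ ((N + 1) * M * B ^ N) * d x ^ k := by
          apply mul_le_mul _ (le_of_lt hcase) zero_le_one (le_of_lt hCpos)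
          have h1 : (1:ℝ) ≤ B ^ N := one_le_pow₀ (n := N) hB1
          have h2 : (0:ℝ) ≤ (N:ℝ) * (M * B ^ N) := by positivity
          nlinarith
end
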